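/- arXiv:2103.16208 — 7 statements merged into one kernel-verified Lean document; each statement's English description precedes it below -/
import Mathlib

section
/- Let k ≥ 2, n ≥ k and 1 ≤ ℓ ≤ n-1, and let M = M_ℓ be the block diagonal weight matrix. Let J = {j_1 < ... < j_k} ∈ I_{k,n} and define τ ∈ S_k by τ = id if j_1 > ℓ or j_2 ≤ ℓ, and τ = (1 2) (the transposition of 1 and 2) otherwise. Then for every σ ∈ S_k with σ ≠ τ, one has Σ_{i=1}^k M(i, j_{σ(i)}) > Σ_{i=1}^k M(i, j_{τ(i)}). Consequently the initial term of the Plücker form φ_n(P_J) with respect to M_ℓ is the single monomial x_{1,j_1} x_{2,j_2} ··· x_{k,j_k} if j_1 > ℓ or j_2 ≤ ℓ, and x_{1,j_2} x_{2,j_1} x_{3,j_3} ··· x_{k,j_k} otherwise. -/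
/-!
Row `i ≠ 2` of `M_ℓ` is `(i - 1)(n + 1 - j)` and row `2` is `(n + 1 - j) + ℓ - n·[j ≤ ℓ]`. Hence the
`M_ℓ`-weight of `σ` on `J` is the rearrangement sum `∑ (i - 1) b_{σ(i)}`, with `b_s = n + 1 - j_s`
strictly decreasing, plus `ℓ`, minus a bonus `n` when the entry placed in row `2` is at most `ℓ`.
The rearrangement sum alone is uniquely minimised by the identity, and the bonus never favours
another permutation unless `j_1 ≤ ℓ < j_2`. In that case the bonus requires `σ(2) = 1`; writing
`σ = ρ (1 2)` with `ρ(1) = 1` shows that `(1 2)` is the unique cheapest such `σ`, and it beats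
every `σ` with `σ(2) ≠ 1` because its extra cost `j_2 - j_1` over the identity is less than `n`.
-/

open MvPolynomial

/-- `IsIdx n k J` : `J` is a strictly increasing `k`-tuple with entries in `{1, …, n}`,
representing an element `{J 0 < J 1 < … < J (k-1)}` of `I_{k,n}`. -/
def IsIdx (n k : ℕ) (J : Fin k → ℕ) : Prop :=
  StrictMono J ∧ ∀ s, 1 ≤ J s ∧ J s ≤ n

/-- Componentwise (Bruhat) order on sorted tuples. -/
def TupLe {k : ℕ} (I J : Fin k → ℕ) : Prop := ∀ s, I s ≤ J s

/-- Index type of the Plücker variables `P_I`, `I ∈ I_{k,n}`. -/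
def PlVar (n k : ℕ) : Type := {J : Fin k → ℕ // IsIdx n k J}

/-- The number of entries of `J` lying in `{1, …, ℓ}`. -/
def nSmall {k : ℕ} (ℓ : ℕ) (J : Fin k → ℕ) : ℕ :=
  (Finset.univ.filter fun s => J s ≤ ℓ).card

/-- Row assignment of the block diagonal matching field `B_ℓ` : the entry of `J` in sorted
position `i` (0-indexed) is placed in this (1-indexed) row. -/
def mfRow {k : ℕ} (ℓ : ℕ) (J : Fin k → ℕ) (i : Fin k) : ℕ :=
  if 2 ≤ k ∧ nSmall ℓ J = 1 then
    (if (i : ℕ) = 0 then 2 else if (i : ℕ) = 1 then 1 else (i : ℕ) + 1)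
  else (i : ℕ) + 1

/-- The monomial map `φ_ℓ` of the block diagonal matching field `B_ℓ`. -/
noncomputable def phiMF (K : Type*) [Field K] (n k ℓ : ℕ) :
    MvPolynomial (PlVar n k) K →ₐ[K] MvPolynomial (ℕ × ℕ) K :=
  aeval fun J => ∏ i : Fin k, X (mfRow ℓ J.val i, J.val i)

/-- The Plücker map, sending `P_J` to the `k × k` minor on columns `J`
of the generic matrix `(x_{i,j})`. -/
noncomputable def pluMap (K : Type*) [Field K] (n k : ℕ) :
    MvPolynomial (PlVar n k) K →ₐ[K] MvPolynomial (ℕ × ℕ) K :=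
  aeval fun J =>
    (Matrix.of fun r c : Fin k => (X ((r : ℕ) + 1, J.val c) : MvPolynomial (ℕ × ℕ) K)).det

/-- Restriction `G|_T = (G + ⟨P_I : I ∉ T⟩) ∩ K[P_I : I ∈ T]` of an ideal to the
variables indexed by `T`. -/
noncomputable def restrictIdeal {K : Type*} [Field K] {n k : ℕ}
    (G : Ideal (MvPolynomial (PlVar n k) K)) (T : Set (PlVar n k)) :
    Ideal (MvPolynomial T K) :=
  Ideal.comap (rename fun x : T => (x : PlVar n k))
    (G ⊔ Ideal.span (X '' {J | J ∉ T}))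

/-- An ideal of a polynomial ring is monomial-free if it contains no monomial. -/
def MonomialFree {K : Type*} [Field K] {σ : Type*} (I : Ideal (MvPolynomial σ K)) : Prop :=
  ∀ m : σ →₀ ℕ, (monomial m (1 : K)) ∉ I

/-- `T_w^v = {I ∈ I_{k,n} : v ≤ I ≤ w}`. -/
def TWV {n k : ℕ} (v w : PlVar n k) : Set (PlVar n k) :=
  {J | TupLe v.val J.val ∧ TupLe J.val w.val}

/-- `{I ∈ I_{k,n} : I ≤ w}`. -/
def TleW {n k : ℕ} (w : PlVar n k) : Set (PlVar n k) := {J | TupLe J.val w.val}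

/-- `{I ∈ I_{k,n} : v ≤ I}`. -/
def TgeV {n k : ℕ} (v : PlVar n k) : Set (PlVar n k) := {J | TupLe v.val J.val}

/-- The weight matrix `M_ℓ` (rows and columns 1-indexed). -/
def Mmat (n ℓ : ℕ) (i j : ℕ) : ℤ :=
  if i = 2 then (if j ≤ ℓ then (ℓ : ℤ) - j + 1 else (n : ℤ) - j + ℓ + 1)
  else ((i : ℤ) - 1) * ((n : ℤ) - j + 1)

/-- The weight `w_ℓ(P_J)` induced by `M_ℓ` on the Plücker variable `P_J`. -/
def wVec (n ℓ : ℕ) {k : ℕ} (J : Fin k → ℕ) : ℤ :=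
  ∑ i : Fin k, Mmat n ℓ (mfRow ℓ J i) (J i)

/-- Weight of an exponent vector with respect to a weight vector `u`. -/
def expWt {σ : Type*} (u : σ → ℤ) (m : σ →₀ ℕ) : ℤ := m.sum fun i e => u i * (e : ℤ)

/-- Initial form of a polynomial: the sum of its terms of minimal `u`-weight. -/
noncomputable def initialForm {K σ : Type*} [Field K] (u : σ → ℤ) (f : MvPolynomial σ K) :
    MvPolynomial σ K :=
  ∑ m ∈ f.support.filter (fun m => ∀ m' ∈ f.support, expWt u m ≤ expWt u m'),
    monomial m (coeff m f)

/-- Initial ideal with respect to the weight vector `u`. -/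
noncomputable def initialIdeal {K σ : Type*} [Field K] (u : σ → ℤ)
    (I : Ideal (MvPolynomial σ K)) : Ideal (MvPolynomial σ K) :=
  Ideal.span {g | ∃ f ∈ I, g = initialForm u f}

/-- `w_0 I = {n + 1 - i : i ∈ I}`, as a sorted tuple. -/
def w0t (n : ℕ) {k : ℕ} (I : Fin k → ℕ) : Fin k → ℕ :=
  fun s => n + 1 - I ⟨k - 1 - (s : ℕ), by have := s.isLt; omega⟩

/-- Membership in `Z_{k,n}` : either `J = {1, …, k-1, i}` with `k ≤ i ≤ n`,
or `J = {1, …, k+1} \\ {i}` with `1 ≤ i ≤ k-1`. -/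
def ZPred (n k : ℕ) (J : Fin k → ℕ) : Prop :=
  (∃ i, k ≤ i ∧ i ≤ n ∧
    ∀ s : Fin k, J s = if (s : ℕ) + 1 < k then (s : ℕ) + 1 else i) ∨
  (∃ i, 1 ≤ i ∧ i ≤ k - 1 ∧
    ∀ s : Fin k, J s = if (s : ℕ) + 1 < i then (s : ℕ) + 1 else (s : ℕ) + 2)

/-- A two-column semi-standard Young tableau with columns `I`, `J`. -/
def SSYT (n k : ℕ) (I J : Fin k → ℕ) : Prop :=
  IsIdx n k I ∧ IsIdx n k J ∧ ∀ s, I s ≤ J s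

/-- The map `Γ_ℓ` on two-column semi-standard Young tableaux (columns as sorted tuples). -/
def Gamma (ℓ : ℕ) {k : ℕ} (I J : Fin k → ℕ) : (Fin k → ℕ) × (Fin k → ℕ) :=
  if h : 2 ≤ k then
    let i0 := I ⟨0, by omega⟩
    let i1 := I ⟨1, by omega⟩
    let j0 := J ⟨0, by omega⟩
    let j1 := J ⟨1, by omega⟩
    if (i0 ≤ ℓ ∧ i1 ≤ ℓ ∧ j0 ≤ ℓ ∧ ℓ < j1 ∧ i0 < j0 ∧ j0 < i1) ∨
       (i0 ≤ ℓ ∧ ℓ < i1 ∧ ℓ < j0 ∧ ℓ < j1 ∧ j0 < i1 ∧ i1 < j1) then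
      ((fun s => if (s : ℕ) = 0 then j0 else I s), (fun s => if (s : ℕ) = 0 then i0 else J s))
    else (I, J)
  else (I, J)

/-- A column (a `k`-subset given as a sorted tuple) displayed in `B_ℓ`-order:
when `k ≥ 2` and exactly one entry is `≤ ℓ`, the two smallest entries are swapped. -/
def rowArrange (ℓ : ℕ) {k : ℕ} (C : Fin k → ℕ) : Fin k → ℕ :=
  if h : 2 ≤ k then
    (if nSmall ℓ C = 1 then
      fun s => if (s : ℕ) = 0 then C ⟨1, by omega⟩
        else if (s : ℕ) = 1 then C ⟨0, by omega⟩ else C s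
    else C)
  else C

/-- Two two-column tableaux (with columns `A,B` resp. `C,D`) are row-wise equal. -/
def rowEq {k : ℕ} (A B C D : Fin k → ℕ) : Prop :=
  ∀ s, ({A s, B s} : Multiset ℕ) = {C s, D s}

/-- The kernel of the restricted monomial map `φ_ℓ|_T`. -/
noncomputable def kerPhiRes (K : Type*) [Field K] (n k ℓ : ℕ) (T : Set (PlVar n k)) :
    Ideal (MvPolynomial T K) :=
  RingHom.ker ((phiMF K n k ℓ).comp (rename fun x : T => (x : PlVar n k)))

/-- The ideal `I(X_w^v)` of the Richardson variety: the restriction of the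
Plücker ideal `G_{k,n}` to the variables in `T_w^v`. -/
noncomputable def richIdeal (K : Type*) [Field K] (n k : ℕ) (v w : PlVar n k) :
    Ideal (MvPolynomial (TWV v w) K) :=
  restrictIdeal (RingHom.ker (pluMap K n k)) (TWV v w)

theorem Fin.sum_mul_lt_sum_mul_comp_perm_of_ne_one {k : ℕ} {α : Type*} [Ring α] [LinearOrder α]
    [IsStrictOrderedRing α] {f g : Fin k → α} (hf : StrictMono f) (hg : StrictAnti g)
    {σ : Equiv.Perm (Fin k)} (hσ : σ ≠ 1) :
    ∑ i, f i * g i < ∑ i, f i * g (σ i) := by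
  have hfg : Antivary f g := fun i j hij => hf.monotone (hg.lt_iff_gt.1 hij).le
  refine hfg.sum_mul_lt_sum_mul_comp_perm_iff.2 fun hfgσ =>
    hσ ((Equiv.Perm.monotone_iff σ).1 fun i j hij => ?_)
  by_contra! hji
  exact (hfgσ (hg hji)).not_gt (hf (hij.lt_of_ne fun h => hji.ne (congrArg σ h).symm))

theorem Fin.sum_val_mul_lt_sum_val_mul_comp_perm {k : ℕ} {g : Fin k → ℤ} (hg : StrictAnti g)
    {σ : Equiv.Perm (Fin k)} (hσ : σ ≠ 1) :
    ∑ i : Fin k, (i : ℤ) * g i < ∑ i : Fin k, (i : ℤ) * g (σ i) :=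
  Fin.sum_mul_lt_sum_mul_comp_perm_of_ne_one (Nat.strictMono_cast.comp Fin.val_strictMono) hg hσ

theorem sum_mul_comp_mul_swap {ι α : Type*} [Fintype ι] [DecidableEq ι] [CommRing α]
    (f g : ι → α) (σ : Equiv.Perm ι) (a c : ι) :
    ∑ i, f i * g ((σ * Equiv.swap a c) i) =
      ∑ i, f i * g (σ i) + (f c - f a) * (g (σ a) - g (σ c)) := by
  rcases eq_or_ne a c with rfl | hac
  · simp
  rw [← Equiv.sum_comp (Equiv.swap a c)]
  simp only [Equiv.Perm.mul_apply, Equiv.swap_apply_self]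
  rw [← sub_eq_iff_eq_add', ← Finset.sum_sub_distrib, Fintype.sum_eq_add a c hac
    fun i ⟨hia, hic⟩ => by rw [Equiv.swap_apply_of_ne_of_ne hia hic, sub_self]]
  simp only [Equiv.swap_apply_left, Equiv.swap_apply_right]
  ring

-- Positions are 0-based: `⟨0, _⟩` and `⟨1, _⟩` hold `j_1` and `j_2`; row `i + 1` is indexed by `i`.
section
variable {k : ℕ} (hk : 1 < k) {b : Fin k → ℤ}

theorem sum_mul_swap_lt_of_apply_one_eq_zero (hb : StrictAnti b) {σ : Equiv.Perm (Fin k)}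
    (hσ : σ ≠ Equiv.swap ⟨0, by omega⟩ ⟨1, hk⟩) (hσ₁ : σ ⟨1, hk⟩ = ⟨0, by omega⟩) :
    ∑ i : Fin k, (i : ℤ) * b (Equiv.swap ⟨0, by omega⟩ ⟨1, hk⟩ i) <
      ∑ i : Fin k, (i : ℤ) * b (σ i) := by
  set z₀ : Fin k := ⟨0, by omega⟩
  set z₁ : Fin k := ⟨1, hk⟩
  have hρ : σ * Equiv.swap z₀ z₁ ≠ 1 := fun h =>
    hσ (by rw [mul_eq_one_iff_eq_inv.1 h, Equiv.swap_inv])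
  have hρ_lt := Fin.sum_val_mul_lt_sum_val_mul_comp_perm hb hρ
  have hσ_eq := sum_mul_comp_mul_swap (fun i : Fin k => (i : ℤ)) b (σ * Equiv.swap z₀ z₁) z₀ z₁
  have hτ_eq := sum_mul_comp_mul_swap (fun i : Fin k => (i : ℤ)) b 1 z₀ z₁
  have hσ₀ : z₁ ≤ σ z₀ := by
    have hσz₀ : σ z₀ ≠ z₀ := fun h => absurd (σ.injective (h.trans hσ₁.symm)) (by simp [z₀, z₁])
    exact Fin.le_def.2 (Nat.one_le_iff_ne_zero.2 fun h => hσz₀ (Fin.ext h))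
  simp only [Equiv.mul_swap_mul_self, one_mul, Equiv.Perm.mul_apply, Equiv.swap_apply_left,
    Equiv.swap_apply_right, hσ₁, Equiv.Perm.one_apply] at hσ_eq hτ_eq hρ_lt
  have hz : ((z₁ : ℕ) : ℤ) - (z₀ : ℕ) = 1 := by simp [z₀, z₁]
  rw [hz, one_mul] at hσ_eq hτ_eq
  linarith [hb.antitone hσ₀]

theorem sum_mul_swap_le_add (hb : StrictAnti b) (σ : Equiv.Perm (Fin k)) :
    ∑ i : Fin k, (i : ℤ) * b (Equiv.swap ⟨0, by omega⟩ ⟨1, hk⟩ i) ≤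
      ∑ i : Fin k, (i : ℤ) * b (σ i) + (b ⟨0, by omega⟩ - b ⟨1, hk⟩) := by
  have hτ_eq := sum_mul_comp_mul_swap (fun i : Fin k => (i : ℤ)) b 1 ⟨0, by omega⟩ ⟨1, hk⟩
  simp only [one_mul, Equiv.Perm.one_apply, Nat.cast_one, Nat.cast_zero, sub_zero] at hτ_eq
  have hle : ∑ i : Fin k, (i : ℤ) * b i ≤ ∑ i : Fin k, (i : ℤ) * b (σ i) := by
    rcases eq_or_ne σ 1 with rfl | hσ
    · rfl
    · exact (Fin.sum_val_mul_lt_sum_val_mul_comp_perm hb hσ).le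
  linarith

end

theorem Mmat_succ (n ℓ i j : ℕ) :
    Mmat n ℓ (i + 1) j =
      i * ((n : ℤ) + 1 - j) + if i = 1 then ℓ - (if j ≤ ℓ then (n : ℤ) else 0) else 0 := by
  rcases eq_or_ne i 1 with rfl | hi
  · simp only [Mmat, if_true]
    split_ifs <;> push_cast <;> ring
  · simp only [Mmat, show i + 1 ≠ 2 by omega, hi, if_false]
    push_cast
    ring

theorem sum_Mmat_succ (n ℓ : ℕ) {k : ℕ} (c : Fin k → ℕ) (i₁ : Fin k) (hi₁ : (i₁ : ℕ) = 1) :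
    ∑ i : Fin k, Mmat n ℓ (i + 1) (c i) =
      ∑ i : Fin k, (i : ℤ) * ((n : ℤ) + 1 - c i) + ℓ - if c i₁ ≤ ℓ then (n : ℤ) else 0 := by
  have hi : ∀ i : Fin k, (i : ℕ) = 1 ↔ i = i₁ := fun i => by rw [Fin.ext_iff, hi₁]
  simp only [Mmat_succ, hi, Finset.sum_add_distrib, Finset.sum_ite_eq', Finset.mem_univ, if_true]
  ring

section
variable {n k ℓ : ℕ} {J : Fin k → ℕ} (hk : 1 < k)

theorem sum_Mmat_lt_of_ne_one (hJ : IsIdx n k J) (hJℓ : ℓ < J ⟨0, by omega⟩ ∨ J ⟨1, hk⟩ ≤ ℓ)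
    {σ : Equiv.Perm (Fin k)} (hσ : σ ≠ 1) :
    ∑ i : Fin k, Mmat n ℓ (i + 1) (J i) < ∑ i : Fin k, Mmat n ℓ (i + 1) (J (σ i)) := by
  set z₀ : Fin k := ⟨0, by omega⟩
  set z₁ : Fin k := ⟨1, hk⟩
  have hb : StrictAnti fun s => (n : ℤ) + 1 - J s :=
    fun _ _ h => sub_lt_sub_left (Nat.cast_lt.2 (hJ.1 h)) _
  rw [sum_Mmat_succ n ℓ _ z₁ rfl, sum_Mmat_succ n ℓ _ z₁ rfl]
  have hind : (if J (σ z₁) ≤ ℓ then (n : ℤ) else 0) ≤ if J z₁ ≤ ℓ then (n : ℤ) else 0 := by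
    rcases hJℓ with hJℓ | hJℓ
    · have hJσ₁ := hJ.1.monotone (Fin.le_def.2 (Nat.zero_le (σ z₁)) : z₀ ≤ σ z₁)
      have hJ₀₁ := hJ.1 (show z₀ < z₁ from Fin.lt_def.2 Nat.zero_lt_one)
      rw [if_neg (by omega), if_neg (by omega)]
    · rw [if_pos hJℓ]
      split_ifs <;> simp
  linarith [Fin.sum_val_mul_lt_sum_val_mul_comp_perm hb hσ]

theorem sum_Mmat_swap_lt_of_ne_swap (hJ : IsIdx n k J) (hJ₀ : J ⟨0, by omega⟩ ≤ ℓ)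
    (hJ₁ : ℓ < J ⟨1, hk⟩) {σ : Equiv.Perm (Fin k)} (hσ : σ ≠ Equiv.swap ⟨0, by omega⟩ ⟨1, hk⟩) :
    ∑ i : Fin k, Mmat n ℓ (i + 1) (J (Equiv.swap ⟨0, by omega⟩ ⟨1, hk⟩ i)) <
      ∑ i : Fin k, Mmat n ℓ (i + 1) (J (σ i)) := by
  set z₀ : Fin k := ⟨0, by omega⟩
  set z₁ : Fin k := ⟨1, hk⟩
  have hb : StrictAnti fun s => (n : ℤ) + 1 - J s :=
    fun _ _ h => sub_lt_sub_left (Nat.cast_lt.2 (hJ.1 h)) _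
  rw [sum_Mmat_succ n ℓ _ z₁ rfl, sum_Mmat_succ n ℓ _ z₁ rfl, Equiv.swap_apply_right,
    if_pos hJ₀]
  by_cases hσ₁ : σ z₁ = z₀
  · rw [hσ₁, if_pos hJ₀]
    linarith [sum_mul_swap_lt_of_apply_one_eq_zero hk hb hσ hσ₁]
  · have hσ₁' : z₁ ≤ σ z₁ := Fin.le_def.2 (Nat.one_le_iff_ne_zero.2 fun h => hσ₁ (Fin.ext h))
    rw [if_neg (by have hJσ₁ := hJ.1.monotone hσ₁'; omega)]
    linarith [sum_mul_swap_le_add hk hb σ, (hJ.2 z₀).1, (hJ.2 z₁).2]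

end

/-- For the block diagonal weight matrix `M_ℓ` with `1 ≤ ℓ ≤ n-1` and
`k ≥ 2`, the unique minimizer of the `M_ℓ`-weight on `J = {j_1 < … < j_k}` is the identity
if `j_1 > ℓ` or `j_2 ≤ ℓ`, and the transposition `(1 2)` otherwise; every other permutation
has strictly larger weight. -/
theorem statement_2 (n k ℓ : ℕ) (hk : 2 ≤ k)
    (J : Fin k → ℕ) (hJ : IsIdx n k J) :
    ∀ σ : Equiv.Perm (Fin k),
      σ ≠ (if ℓ < J ⟨0, by omega⟩ ∨ J ⟨1, by omega⟩ ≤ ℓ then 1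
            else Equiv.swap ⟨0, by omega⟩ ⟨1, by omega⟩) →
      (∑ i : Fin k, Mmat n ℓ ((i : ℕ) + 1)
          (J ((if ℓ < J ⟨0, by omega⟩ ∨ J ⟨1, by omega⟩ ≤ ℓ then 1
            else Equiv.swap ⟨0, by omega⟩ ⟨1, by omega⟩ : Equiv.Perm (Fin k)) i))) <
        ∑ i : Fin k, Mmat n ℓ ((i : ℕ) + 1) (J (σ i)) := by
  intro σ hσ
  split_ifs at hσ ⊢ with hJℓ
  · exact sum_Mmat_lt_of_ne_one hk hJ hJℓ hσ
  · obtain ⟨hJ₀, hJ₁⟩ := not_or.1 hJℓ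
    exact sum_Mmat_swap_lt_of_ne_swap hk hJ (not_lt.1 hJ₀) (not_le.1 hJ₁) hσ
end

section
/- Let k ≥ 2, n ≥ k and 1 ≤ ℓ ≤ n-1, and let M_ℓ be the block diagonal weight matrix. For J = {j_1 < ... < j_k} ∈ I_{k,n}, the minimum over σ ∈ S_k of the M_ℓ-weight Σ_{i=1}^k M_ℓ(i, j_{σ(i)}) equals: (n+ℓ+1-j_2) + Σ_{i=3}^k (i-1)(n+1-j_i) if |J ∩ {1,...,ℓ}| = 0; (ℓ+1-j_1) + Σ_{i=3}^k (i-1)(n+1-j_i) if |J ∩ {1,...,ℓ}| = 1; and (ℓ+1-j_2) + Σ_{i=3}^k (i-1)(n+1-j_i) if |J ∩ {1,...,ℓ}| ≥ 2. -/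
open MvPolynomial

lemma rearr_aux {k : ℕ} (J : Fin k → ℕ) (hJ : StrictMono J) (c : Fin k → ℤ)
    (hc : Monotone c) (σ : Equiv.Perm (Fin k)) :
    ∑ i, c i * (J (σ i) : ℤ) ≤ ∑ i, c i * (J i : ℤ) := by
  have hmono : Monovary c fun i => (J i : ℤ) := by
    intro i j hij
    exact hc (hJ.lt_iff_lt.mp (Nat.cast_lt.mp hij)).le
  simpa [smul_eq_mul] using hmono.sum_smul_comp_perm_le_sum_smul (σ := σ)

/-- **original docstring.** The minimum over `σ ∈ S_k` of the `M_ℓ`-weight on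
`J = {j_1 < … < j_k}` is given by the piecewise formula of Remark `def:block_weight`,
according to the size of `J ∩ {1, …, ℓ}`. -/
theorem statement_3 (n k ℓ : ℕ) (hk : 2 ≤ k) (hkn : k ≤ n)
    (hℓ1 : 1 ≤ ℓ) (hℓ2 : ℓ ≤ n - 1)
    (J : Fin k → ℕ) (hJ : IsIdx n k J) :
    IsLeast
      (Set.range fun σ : Equiv.Perm (Fin k) =>
        ∑ i : Fin k, Mmat n ℓ ((i : ℕ) + 1) (J (σ i)))
      ((if nSmall ℓ J = 0 then (n : ℤ) + ℓ + 1 - J ⟨1, by omega⟩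
        else if nSmall ℓ J = 1 then (ℓ : ℤ) + 1 - J ⟨0, by omega⟩
        else (ℓ : ℤ) + 1 - J ⟨1, by omega⟩) +
        ∑ i ∈ Finset.univ.filter (fun i : Fin k => 2 ≤ (i : ℕ)),
          ((i : ℕ) : ℤ) * ((n : ℤ) + 1 - J i)) := by
  classical
  obtain ⟨hmJ, hbJ⟩ := hJ
  set i0 : Fin k := ⟨0, by omega⟩ with hi0
  set i1 : Fin k := ⟨1, by omega⟩ with hi1
  have hi01 : i0 ≠ i1 := by simp [hi0, hi1, Fin.ext_iff]
  -- rewrite the weight of a permutation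
  have hterm : ∀ (i : Fin k) (j : ℕ), Mmat n ℓ ((i : ℕ) + 1) j
      = ((i : ℕ) : ℤ) * ((n : ℤ) + 1 - (j : ℤ))
        + (if i = i1 then (ℓ : ℤ) - (if j ≤ ℓ then (n : ℤ) else 0) else 0) := by
    intro i j
    unfold Mmat
    by_cases hi : i = i1
    · have h2 : (i : ℕ) + 1 = 2 := by rw [hi]
      rw [if_pos h2, if_pos hi]
      split_ifs with hjl
      · have : (i : ℕ) = 1 := by omega
        rw [this]; push_cast; ring
      · have : (i : ℕ) = 1 := by omega
        rw [this]; push_cast; ring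
    · have h2 : (i : ℕ) + 1 ≠ 2 := by
        have : (i : ℕ) ≠ 1 := by
          intro h; exact hi (by simp [hi1, Fin.ext_iff, h])
        omega
      rw [if_neg h2, if_neg hi]
      push_cast; ring
  have hsum : ∀ σ : Equiv.Perm (Fin k),
      (∑ i : Fin k, Mmat n ℓ ((i : ℕ) + 1) (J (σ i)))
      = (ℓ : ℤ) - (if J (σ i1) ≤ ℓ then (n : ℤ) else 0)
        + ∑ i : Fin k, ((i : ℕ) : ℤ) * ((n : ℤ) + 1 - (J (σ i) : ℤ)) := by
    intro σ
    rw [Finset.sum_congr rfl fun i _ => hterm i (J (σ i)), Finset.sum_add_distrib,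
      Finset.sum_ite_eq' Finset.univ i1
        (fun i => (ℓ : ℤ) - (if J (σ i) ≤ ℓ then (n : ℤ) else 0))]
    rw [if_pos (Finset.mem_univ i1), add_comm]
  -- splitting off the first two coefficients
  have hfe : Finset.univ.filter (fun i : Fin k => ¬ 2 ≤ (i : ℕ)) = {i0, i1} := by
    ext i
    simp only [Finset.mem_filter, Finset.mem_univ, true_and, Finset.mem_insert,
      Finset.mem_singleton, hi0, hi1, Fin.ext_iff]
    omega
  have hsplit : ∀ h : Fin k → ℤ, ∑ i : Fin k, ((i : ℕ) : ℤ) * h i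
      = h i1 + ∑ i ∈ Finset.univ.filter (fun i : Fin k => 2 ≤ (i : ℕ)),
          ((i : ℕ) : ℤ) * h i := by
    intro h
    rw [← Finset.sum_filter_add_sum_filter_not Finset.univ (fun i : Fin k => 2 ≤ (i : ℕ))
      (fun i => ((i : ℕ) : ℤ) * h i), hfe, Finset.sum_pair hi01]
    have h0 : ((i0 : ℕ) : ℤ) = 0 := by simp [hi0]
    have h1 : ((i1 : ℕ) : ℤ) = 1 := by simp [hi1]
    rw [h0, h1]; ring
  -- rearrangement comparison
  have comp : ∀ c : Fin k → ℤ, Monotone c → ∀ σ : Equiv.Perm (Fin k),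
      ∑ i : Fin k, c i * ((n : ℤ) + 1 - (J i : ℤ))
        ≤ ∑ i : Fin k, c i * ((n : ℤ) + 1 - (J (σ i) : ℤ)) := by
    intro c hc σ
    have h := rearr_aux J hmJ c hc σ
    have e : ∀ τ : Fin k → Fin k,
        ∑ i : Fin k, c i * ((n : ℤ) + 1 - (J (τ i) : ℤ))
        = (∑ i : Fin k, c i * ((n : ℤ) + 1)) - ∑ i : Fin k, c i * (J (τ i) : ℤ) := by
      intro τ
      rw [← Finset.sum_sub_distrib]
      exact Finset.sum_congr rfl fun i _ => by ring
    have e1 := e σ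
    have e2 := e id
    simp only [id_eq] at e2
    linarith
  have hmono1 : Monotone (fun i : Fin k => ((i : ℕ) : ℤ)) := by
    intro a b hab
    have hab' : (a : ℕ) ≤ (b : ℕ) := Fin.le_def.mp hab
    simp only
    omega
  -- the coefficient vector (0,0,2,3,…)
  have hmono0 : Monotone (fun i : Fin k => if 2 ≤ (i : ℕ) then ((i : ℕ) : ℤ) else 0) := by
    intro a b hab
    have hab' : (a : ℕ) ≤ (b : ℕ) := Fin.le_def.mp hab
    simp only
    split_ifs <;> omega
  -- unconstrained lower bound
  have B1 : ∀ σ : Equiv.Perm (Fin k),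
      ((n : ℤ) + 1 - (J i1 : ℤ)) +
        (∑ i ∈ Finset.univ.filter (fun i : Fin k => 2 ≤ (i : ℕ)),
          ((i : ℕ) : ℤ) * ((n : ℤ) + 1 - (J i : ℤ)))
      ≤ ∑ i : Fin k, ((i : ℕ) : ℤ) * ((n : ℤ) + 1 - (J (σ i) : ℤ)) := by
    intro σ
    have h := comp (fun i => ((i : ℕ) : ℤ)) hmono1 σ
    have h2 := hsplit (fun i => (n : ℤ) + 1 - (J i : ℤ))
    linarith
  -- constrained lower bound
  have B2 : ∀ σ : Equiv.Perm (Fin k), σ i1 = i0 →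
      ((n : ℤ) + 1 - (J i0 : ℤ)) +
        (∑ i ∈ Finset.univ.filter (fun i : Fin k => 2 ≤ (i : ℕ)),
          ((i : ℕ) : ℤ) * ((n : ℤ) + 1 - (J i : ℤ)))
      ≤ ∑ i : Fin k, ((i : ℕ) : ℤ) * ((n : ℤ) + 1 - (J (σ i) : ℤ)) := by
    intro σ hσ
    set c0 : Fin k → ℤ := fun i => if 2 ≤ (i : ℕ) then ((i : ℕ) : ℤ) else 0 with hc0def
    have hre : ∑ i : Fin k, ((i : ℕ) : ℤ) * ((n : ℤ) + 1 - (J (σ i) : ℤ))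
        = ∑ m : Fin k, (((Equiv.swap i0 i1) m : ℕ) : ℤ)
            * ((n : ℤ) + 1 - (J (σ ((Equiv.swap i0 i1) m)) : ℤ)) :=
      (Equiv.sum_comp (Equiv.swap i0 i1)
        (fun i => ((i : ℕ) : ℤ) * ((n : ℤ) + 1 - (J (σ i) : ℤ)))).symm
    have hpt : ∀ m : Fin k, (((Equiv.swap i0 i1) m : ℕ) : ℤ)
        * ((n : ℤ) + 1 - (J (σ ((Equiv.swap i0 i1) m)) : ℤ))
        = (if m = i0 then ((n : ℤ) + 1 - (J i0 : ℤ)) else 0)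
          + c0 m * ((n : ℤ) + 1 - (J (((Equiv.swap i0 i1).trans σ) m) : ℤ)) := by
      intro m
      by_cases h0 : m = i0
      · subst h0
        rw [if_pos rfl]
        have hsw : (Equiv.swap i0 i1) i0 = i1 := Equiv.swap_apply_left i0 i1
        rw [hsw]
        have hc : c0 i0 = 0 := by simp [hc0def, hi0]
        rw [Equiv.trans_apply, hsw, hσ]
        have h1 : ((i1 : ℕ) : ℤ) = 1 := by simp [hi1]
        rw [hc, h1]; ring
      · by_cases h1 : m = i1
        · subst h1
          rw [if_neg h0]
          have hsw : (Equiv.swap i0 i1) i1 = i0 := Equiv.swap_apply_right i0 i1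
          rw [hsw, Equiv.trans_apply, hsw]
          have hc : c0 i1 = 0 := by simp [hc0def, hi1]
          have h00 : ((i0 : ℕ) : ℤ) = 0 := by simp [hi0]
          rw [hc, h00]; ring
        · rw [Equiv.swap_apply_of_ne_of_ne h0 h1, if_neg h0, Equiv.trans_apply,
            Equiv.swap_apply_of_ne_of_ne h0 h1]
          have h2 : 2 ≤ (m : ℕ) := by
            have e0 : (m : ℕ) ≠ 0 := fun h => h0 (by simp [hi0, Fin.ext_iff, h])
            have e1 : (m : ℕ) ≠ 1 := fun h => h1 (by simp [hi1, Fin.ext_iff, h])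
            omega
          have hc : c0 m = ((m : ℕ) : ℤ) := by simp [hc0def, h2]
          rw [hc]; ring
    have hc0S : ∑ m : Fin k, c0 m * ((n : ℤ) + 1 - (J m : ℤ))
        = ∑ i ∈ Finset.univ.filter (fun i : Fin k => 2 ≤ (i : ℕ)),
            ((i : ℕ) : ℤ) * ((n : ℤ) + 1 - (J i : ℤ)) := by
      rw [Finset.sum_filter]
      refine Finset.sum_congr rfl fun m _ => ?_
      simp only [hc0def]
      split_ifs <;> ring
    have hcomp := comp c0 hmono0 ((Equiv.swap i0 i1).trans σ)
    rw [hre, Finset.sum_congr rfl fun m _ => hpt m, Finset.sum_add_distrib,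
      Finset.sum_ite_eq' Finset.univ i0 (fun _ => (n : ℤ) + 1 - (J i0 : ℤ)),
      if_pos (Finset.mem_univ i0)]
    have hcomp' : ∑ m : Fin k, c0 m * ((n : ℤ) + 1 - (J m : ℤ))
        ≤ ∑ m : Fin k, c0 m * ((n : ℤ) + 1 - (J (((Equiv.swap i0 i1).trans σ) m) : ℤ)) := hcomp
    linarith [hc0S, hcomp']
  -- facts about nSmall
  have hn0 : nSmall ℓ J = 0 → ∀ s, ℓ < J s := by
    intro h s
    by_contra hc
    have : s ∈ Finset.univ.filter (fun s => J s ≤ ℓ) := by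
      simp [not_lt.mp hc]
    have := Finset.card_pos.mpr ⟨s, this⟩
    unfold nSmall at h
    omega
  have hn1 : nSmall ℓ J = 1 → J i0 ≤ ℓ ∧ ∀ s, s ≠ i0 → ℓ < J s := by
    intro h
    obtain ⟨a, ha⟩ := Finset.card_eq_one.mp h
    have haf : a ∈ Finset.univ.filter (fun s => J s ≤ ℓ) := by rw [ha]; simp
    have haJ : J a ≤ ℓ := (Finset.mem_filter.mp haf).2
    have h0f : i0 ∈ Finset.univ.filter (fun s => J s ≤ ℓ) := by
      refine Finset.mem_filter.mpr ⟨Finset.mem_univ _, ?_⟩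
      exact le_trans (hmJ.monotone (by simp [hi0, Fin.le_def])) haJ
    have h0a : i0 = a := by rw [ha] at h0f; simpa using h0f
    subst h0a
    refine ⟨haJ, fun s hs => ?_⟩
    by_contra hc
    have : s ∈ Finset.univ.filter (fun s => J s ≤ ℓ) := by simp [not_lt.mp hc]
    rw [ha] at this
    exact hs (by simpa using this)
  have hn2 : nSmall ℓ J ≠ 0 → nSmall ℓ J ≠ 1 → J i1 ≤ ℓ := by
    intro h0 h1
    have h2 : 1 < (Finset.univ.filter (fun s => J s ≤ ℓ)).card := by
      unfold nSmall at h0 h1; omega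
    obtain ⟨a, ha, b, hb, hab⟩ := Finset.one_lt_card.mp h2
    have haJ : J a ≤ ℓ := (Finset.mem_filter.mp ha).2
    have hbJ' : J b ≤ ℓ := (Finset.mem_filter.mp hb).2
    have : i1 ≤ a ∨ i1 ≤ b := by
      by_contra hc
      push_neg at hc
      have h1' : (a : ℕ) = 0 := by
        have := Fin.lt_def.mp hc.1; simp [hi1] at this; omega
      have h2' : (b : ℕ) = 0 := by
        have := Fin.lt_def.mp hc.2; simp [hi1] at this; omega
      exact hab (Fin.ext (by omega))
    rcases this with h | h
    · exact le_trans (hmJ.monotone h) haJ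
    · exact le_trans (hmJ.monotone h) hbJ'
  constructor
  · -- membership
    by_cases h0 : nSmall ℓ J = 0
    · refine ⟨1, ?_⟩
      have hind : ¬ J ((1 : Equiv.Perm (Fin k)) i1) ≤ ℓ := by
        simp only [Equiv.Perm.one_apply]
        exact not_le.mpr (hn0 h0 i1)
      beta_reduce
      rw [hsum 1, if_neg hind]
      simp only [Equiv.Perm.one_apply]
      rw [hsplit (fun i => (n : ℤ) + 1 - (J i : ℤ)), if_pos h0]
      ring
    · by_cases h1 : nSmall ℓ J = 1
      · refine ⟨Equiv.swap i0 i1, ?_⟩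
        obtain ⟨hJ0, _⟩ := hn1 h1
        have hsw : (Equiv.swap i0 i1) i1 = i0 := Equiv.swap_apply_right i0 i1
        have hind : J ((Equiv.swap i0 i1) i1) ≤ ℓ := by rw [hsw]; exact hJ0
        beta_reduce
        rw [hsum (Equiv.swap i0 i1), if_pos hind,
          hsplit (fun i => (n : ℤ) + 1 - (J ((Equiv.swap i0 i1) i) : ℤ))]
        have hfix : ∑ i ∈ Finset.univ.filter (fun i : Fin k => 2 ≤ (i : ℕ)),
            ((i : ℕ) : ℤ) * ((n : ℤ) + 1 - (J ((Equiv.swap i0 i1) i) : ℤ))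
            = ∑ i ∈ Finset.univ.filter (fun i : Fin k => 2 ≤ (i : ℕ)),
            ((i : ℕ) : ℤ) * ((n : ℤ) + 1 - (J i : ℤ)) := by
          refine Finset.sum_congr rfl fun i hi => ?_
          have h2 : 2 ≤ (i : ℕ) := (Finset.mem_filter.mp hi).2
          rw [Equiv.swap_apply_of_ne_of_ne
            (fun h => by simp [h, hi0] at h2) (fun h => by simp [h, hi1] at h2)]
        rw [hfix, hsw, if_neg h0, if_pos h1]
        have hb := hbJ i0
        ring
      · refine ⟨1, ?_⟩
        have hind : J ((1 : Equiv.Perm (Fin k)) i1) ≤ ℓ := by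
          simp only [Equiv.Perm.one_apply]
          exact hn2 h0 h1
        beta_reduce
        rw [hsum 1, if_pos hind]
        simp only [Equiv.Perm.one_apply]
        rw [hsplit (fun i => (n : ℤ) + 1 - (J i : ℤ)), if_neg h0, if_neg h1]
        ring
  · -- lower bound
    rintro x ⟨σ, rfl⟩
    simp only
    rw [hsum σ]
    have hB1 := B1 σ
    by_cases h0 : nSmall ℓ J = 0
    · rw [if_pos h0]
      have hind : ¬ J (σ i1) ≤ ℓ := not_le.mpr (hn0 h0 (σ i1))
      rw [if_neg hind]
      linarith
    · by_cases h1 : nSmall ℓ J = 1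
      · rw [if_neg h0, if_pos h1]
        obtain ⟨hJ0, hrest⟩ := hn1 h1
        by_cases hσ1 : σ i1 = i0
        · have hB2 := B2 σ hσ1
          rw [hσ1, if_pos hJ0]
          linarith
        · have hind : ¬ J (σ i1) ≤ ℓ := not_le.mpr (hrest (σ i1) hσ1)
          rw [if_neg hind]
          have hb0 := hbJ i0
          have hb1 := hbJ i1
          linarith
      · rw [if_neg h0, if_neg h1]
        have : (if J (σ i1) ≤ ℓ then (n : ℤ) else 0) ≤ (n : ℤ) := by
          split_ifs <;> omega
        linarith
end

section
/- Let k < n be positive integers, let K be a field, and let v ≤ w in I_{k,n}. If ℓ = 0 or ℓ > n-k+1, then the three restricted ideals G_{k,n,ℓ}|_w^v = ker(φ_ℓ)|_{T_w^v}, G_{k,n,ℓ}|_w = ker(φ_ℓ)|_{{I : I ≤ w}} and G_{k,n,ℓ}|^v = ker(φ_ℓ)|_{{I : v ≤ I}} are monomial-free, i.e., none of them contains a monomial in the variables P_I. -/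
open MvPolynomial

section Aux

lemma strictMono_add_le' {k : ℕ} {J : Fin k → ℕ} (hJ : StrictMono J) :
    ∀ (d : ℕ) (s t : Fin k), (t : ℕ) = (s : ℕ) + d → J s + d ≤ J t := by
  intro d
  induction d with
  | zero =>
    intro s t h
    have : s = t := Fin.ext (by omega)
    simp [this]
  | succ d ih =>
    intro s t h
    have hlt : (s : ℕ) + d < k := by have := t.isLt; omega
    have h1 := ih s ⟨(s : ℕ) + d, hlt⟩ rfl
    have h2 : J ⟨(s : ℕ) + d, hlt⟩ < J t := hJ (by simp [Fin.lt_def]; omega)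
    omega

lemma mfRow_eq_id {n k ℓ : ℕ} (hℓn : ℓ ≤ n) (hℓ : ℓ = 0 ∨ n - k + 1 < ℓ)
    {J : Fin k → ℕ} (hJ : IsIdx n k J) (i : Fin k) : mfRow ℓ J i = (i : ℕ) + 1 := by
  unfold mfRow
  rw [if_neg]
  rintro ⟨hk2, h1⟩
  rcases hℓ with rfl | hℓ
  · have : (Finset.univ.filter fun s => J s ≤ 0) = ∅ := by
      apply Finset.filter_false_of_mem
      intro s _
      have := (hJ.2 s).1
      omega
    rw [nSmall, this] at h1
    simp at h1
  · -- show nSmall ≥ 2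
    have h0k : (0 : ℕ) < k := by omega
    have h1k : (1 : ℕ) < k := hk2
    set s0 : Fin k := ⟨0, h0k⟩
    set s1 : Fin k := ⟨1, h1k⟩
    have hJ1 : J s1 + (k - 2) ≤ J ⟨k - 1, by omega⟩ :=
      strictMono_add_le' hJ.1 (k - 2) s1 ⟨k - 1, by omega⟩ (by simp [s1]; omega)
    have hJtop : J ⟨k - 1, by omega⟩ ≤ n := (hJ.2 _).2
    have hJ1ℓ : J s1 ≤ ℓ := by omega
    have hJ0ℓ : J s0 ≤ ℓ := le_trans (le_of_lt (hJ.1 (by simp [s0, s1, Fin.lt_def]))) hJ1ℓ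
    have hmem0 : s0 ∈ Finset.univ.filter fun s => J s ≤ ℓ := by
      simp [hJ0ℓ]
    have hmem1 : s1 ∈ Finset.univ.filter fun s => J s ≤ ℓ := by
      simp [hJ1ℓ]
    have hne : s0 ≠ s1 := by simp [s0, s1, Fin.ext_iff]
    have : 1 < nSmall ℓ J := Finset.one_lt_card.2 ⟨s0, hmem0, s1, hmem1, hne⟩
    omega

lemma monomialFree_of_pointwise {K : Type*} [Field K] {n k ℓ : ℕ}
    (hrow : ∀ (J : PlVar n k) (i : Fin k), mfRow ℓ J.val i = (i : ℕ) + 1)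
    (Q : Fin k → ℕ → Prop) (T : Set (PlVar n k))
    (hT : ∀ J : PlVar n k, J ∈ T ↔ ∀ s, Q s (J.val s)) :
    MonomialFree (restrictIdeal (RingHom.ker (phiMF K n k ℓ)) T) := by
  classical
  intro m hm
  set p : ℕ × ℕ → K := fun ij =>
    if ∃ s : Fin k, (s : ℕ) + 1 = ij.1 ∧ Q s ij.2 then 1 else 0 with hp
  set ψ : MvPolynomial (PlVar n k) K →ₐ[K] K := (aeval p).comp (phiMF K n k ℓ) with hψ
  have hψX : ∀ J : PlVar n k, ψ (X J) = if J ∈ T then 1 else 0 := by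
    intro J
    have hXJ : ψ (X J) = ∏ i : Fin k, p ((i : ℕ) + 1, J.val i) := by
      have : ψ (X J) = aeval (R := K) p (∏ i : Fin k, X (mfRow ℓ J.val i, J.val i)) := by
        simp only [hψ, AlgHom.comp_apply, phiMF, aeval_X]
      rw [this, map_prod]
      apply Finset.prod_congr rfl
      intro i _
      rw [hrow J i, aeval_X]
    rw [hXJ]
    by_cases hJT : J ∈ T
    · rw [if_pos hJT]
      apply Finset.prod_eq_one
      intro i _
      have hex : ∃ s : Fin k, (s : ℕ) + 1 = (i : ℕ) + 1 ∧ Q s (J.val i) :=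
        ⟨i, rfl, (hT J).1 hJT i⟩
      simp only [hp]
      rw [if_pos hex]
    · rw [if_neg hJT]
      obtain ⟨s, hs⟩ := not_forall.1 (fun h => hJT ((hT J).2 h))
      apply Finset.prod_eq_zero (Finset.mem_univ s)
      have hnex : ¬ ∃ t : Fin k, (t : ℕ) + 1 = (s : ℕ) + 1 ∧ Q t (J.val s) := by
        rintro ⟨t, ht, hq⟩
        have : t = s := Fin.ext (by omega)
        exact hs (this ▸ hq)
      simp only [hp]
      rw [if_neg hnex]
  have hker : (RingHom.ker (phiMF K n k ℓ) ⊔ Ideal.span (X '' {J | J ∉ T}))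
      ≤ RingHom.ker ψ.toRingHom := by
    apply sup_le
    · intro f hf
      have hf0 : phiMF K n k ℓ f = 0 := hf
      simp [RingHom.mem_ker, hψ, hf0]
    · rw [Ideal.span_le]
      rintro g ⟨J, hJ, rfl⟩
      have := hψX J
      simp only [Set.mem_setOf_eq] at hJ
      simp [SetLike.mem_coe, RingHom.mem_ker, this, hJ]
  rw [restrictIdeal, Ideal.mem_comap] at hm
  have h0 : ψ (rename (fun x : T => (x : PlVar n k)) (monomial m 1)) = 0 := hker hm
  rw [rename_monomial] at h0
  rw [monomial_eq, map_mul] at h0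
  have hC : ψ (C (1 : K)) = 1 := by simp
  rw [hC, one_mul] at h0
  have hprod : ψ ((Finsupp.mapDomain (fun x : T => (x : PlVar n k)) m).prod
      fun i e => (X i : MvPolynomial (PlVar n k) K) ^ e) = 1 := by
    rw [Finsupp.prod, map_prod]
    apply Finset.prod_eq_one
    intro i hi
    have hi' := Finsupp.mapDomain_support hi
    rw [Finset.mem_image] at hi'
    obtain ⟨x, _, rfl⟩ := hi'
    rw [map_pow, hψX, if_pos x.2, one_pow]
  rw [hprod] at h0
  exact one_ne_zero h0

end Aux

/-- If `ℓ = 0` or `ℓ > n - k + 1`, then the restricted ideals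
`G_{k,n,ℓ}|_w^v`, `G_{k,n,ℓ}|_w` and `G_{k,n,ℓ}|^v` are monomial-free. -/
theorem statement_4 (K : Type*) [Field K] (n k ℓ : ℕ) (hk : 0 < k) (hkn : k < n)
    (hℓn : ℓ ≤ n) (hℓ : ℓ = 0 ∨ n - k + 1 < ℓ)
    (v w : PlVar n k) (hvw : TupLe v.val w.val) :
    MonomialFree (restrictIdeal (RingHom.ker (phiMF K n k ℓ)) (TWV v w)) ∧
    MonomialFree (restrictIdeal (RingHom.ker (phiMF K n k ℓ)) (TleW w)) ∧
    MonomialFree (restrictIdeal (RingHom.ker (phiMF K n k ℓ)) (TgeV v)) := by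
  have hrow : ∀ (J : PlVar n k) (i : Fin k), mfRow ℓ J.val i = (i : ℕ) + 1 :=
    fun J i => mfRow_eq_id hℓn hℓ J.2 i
  refine ⟨?_, ?_, ?_⟩
  · exact monomialFree_of_pointwise hrow
      (fun s j => v.val s ≤ j ∧ j ≤ w.val s) (TWV v w)
      (fun J => by simp [TWV, TupLe, Set.mem_setOf_eq, forall_and])
  · exact monomialFree_of_pointwise hrow
      (fun s j => j ≤ w.val s) (TleW w)
      (fun J => by simp [TleW, TupLe, Set.mem_setOf_eq])
  · exact monomialFree_of_pointwise hrow
      (fun s j => v.val s ≤ j) (TgeV v)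
      (fun J => by simp [TgeV, TupLe, Set.mem_setOf_eq])
end

section
/- Let k < n be positive integers, K a field, ℓ ∈ {1, ..., n-k+1}, and w = {w_1 < ... < w_k} ∈ I_{k,n}. The restricted ideal G_{k,n,ℓ}|_w = ker(φ_ℓ)|_{{I : I ≤ w}} is monomial-free if and only if at least one of the following holds: w_1 ∈ {1, ℓ, n-k+1}, or w_2 ∈ {1, ..., ℓ} ∪ {w_1 + 1}. -/
open MvPolynomial

/-!
`φ_ℓ` is a monomial map, so a monomial lies in `G|_T` exactly when a monomial with the same
image uses a variable outside `T`: monomial-freeness of `G|_w` says that `{I ≤ w}` is closed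
under the fibres of `φ_ℓ` on exponent vectors. Row `i` of `φ_ℓ(P_J)` holds the `i`-th entry of
`J`, except that the first two entries trade rows when exactly one of them is `≤ ℓ`. Tracing
each entry of a column back to a column below `w` in the same row bounds all its entries by
those of `w` except possibly the first, and each of the listed conditions bounds that one too
(for `w₁ = 1` by counting the entries equal to `1`). When they all fail, a binomial of degree
two in `ker φ_ℓ` trades two columns below `w` for two columns, one of which starts with
`w₁ + 1`. Entries are numbered from `1` as in the statement: `w₁ = w.val ⟨0, _⟩`.
-/

open Finsupp

section ToricMap

variable {σ τ R : Type*} [CommRing R]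

theorem weight_linearCombination {M : Type*} [AddCommMonoid M] (f : τ → M)
    (e : σ → τ →₀ ℕ) (μ : σ →₀ ℕ) :
    weight f (linearCombination ℕ e μ) = μ.sum fun s c => c • weight f (e s) := by
  rw [linearCombination_apply, map_finsuppSum]
  simp only [map_nsmul]

noncomputable def toricMap (R : Type*) [CommRing R] (e : σ → τ →₀ ℕ) :
    MvPolynomial σ R →ₐ[R] MvPolynomial τ R :=
  aeval fun s => monomial (e s) 1

variable (e : σ → τ →₀ ℕ)

theorem toricMap_monomial (μ : σ →₀ ℕ) (a : R) :
    toricMap R e (monomial μ a) = monomial (linearCombination ℕ e μ) a := by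
  simp only [toricMap, aeval_monomial, linearCombination_apply, monomial_finsupp_sum_index,
    monomial_pow, one_pow, algebraMap_eq]

theorem support_toricMap_subset [DecidableEq τ] (p : MvPolynomial σ R) :
    (toricMap R e p).support ⊆ p.support.image (linearCombination ℕ e) := by
  conv_lhs => rw [p.as_sum, map_sum]
  refine support_sum.trans fun d hd => ?_
  obtain ⟨μ, hμ, hd⟩ := Finset.mem_biUnion.mp hd
  rw [toricMap_monomial] at hd
  exact Finset.mem_image.mpr ⟨μ, hμ, (Finset.mem_singleton.mp (support_monomial_subset hd)).symm⟩

def FiberClosed (e : σ → τ →₀ ℕ) (T : Set σ) : Prop :=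
  ∀ μ ν : σ →₀ ℕ, ↑ν.support ⊆ T →
    linearCombination ℕ e μ = linearCombination ℕ e ν → ↑μ.support ⊆ T

theorem monomialFree_comap_ker_toricMap_sup_span_iff {K : Type*} [Field K] (T : Set σ) :
    MonomialFree (Ideal.comap (rename ((↑) : T → σ))
        (RingHom.ker (toricMap K e) ⊔ Ideal.span (X '' {s | s ∉ T}))) ↔ FiberClosed e T := by
  classical
  constructor
  · intro hfree μ ν hν hμν
    by_contra hμ
    obtain ⟨s, hs, hsT⟩ := Set.not_subset.mp hμ
    set m := comapDomain ((↑) : T → σ) ν Subtype.val_injective.injOn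
    have hm : mapDomain (↑) m = ν :=
      mapDomain_comapDomain _ Subtype.val_injective ν (by simpa using hν)
    refine hfree m ?_
    rw [Ideal.mem_comap, rename_monomial, hm,
      show monomial ν (1 : K) = (monomial ν 1 - monomial μ 1) + monomial μ 1 by ring]
    refine Submodule.add_mem_sup ?_ ?_
    · rw [RingHom.mem_ker, map_sub, toricMap_monomial, toricMap_monomial, hμν, sub_self]
    · rw [mem_ideal_span_X_image]
      intro d hd
      rw [Finset.mem_singleton.mp (support_monomial_subset hd)]
      exact ⟨s, hsT, Finsupp.mem_support_iff.mp hs⟩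
  · intro hclosed m hm
    rw [Ideal.mem_comap, rename_monomial, Submodule.mem_sup] at hm
    obtain ⟨a, ha, b, hb, hab⟩ := hm
    have hφ : monomial (linearCombination ℕ e (mapDomain (↑) m)) (1 : K) = toricMap K e b := by
      rw [← toricMap_monomial, ← hab, map_add, RingHom.mem_ker.mp ha, zero_add]
    obtain ⟨μ, hμb, hμ⟩ := Finset.mem_image.mp (support_toricMap_subset e b
      (by rw [← hφ, support_monomial, if_neg one_ne_zero]; exact Finset.mem_singleton_self _))
    obtain ⟨s, hsT, hs⟩ := (mem_ideal_span_X_image.mp hb) μ hμb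
    have hν : ↑(mapDomain ((↑) : T → σ) m).support ⊆ T := fun t ht => by
      obtain ⟨x, -, rfl⟩ := Finset.mem_image.mp (mapDomain_support ht)
      exact x.2
    exact hsT (hclosed μ _ hν hμ (Finsupp.mem_support_iff.mpr hs))

end ToricMap

section Tuples

variable {k : ℕ}

theorem apply_add_sub_le_of_strictMono {J : Fin k → ℕ} (hJ : StrictMono J) {i j : Fin k}
    (hij : i ≤ j) : J i + (j - i : ℕ) ≤ J j := by
  obtain ⟨j, hj⟩ := j
  induction j with
  | zero => rw [show i = ⟨0, hj⟩ from Fin.ext (by simp [Fin.le_def] at hij; omega)]; simp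
  | succ m ih =>
    rcases eq_or_lt_of_le hij with rfl | hlt
    · simp
    · have hm := ih (by omega) (by simp only [Fin.le_def, Fin.lt_def] at hlt ⊢; omega)
      have hstep := hJ (show (⟨m, by omega⟩ : Fin k) < ⟨m + 1, hj⟩ by simp [Fin.lt_def])
      simp only at hm ⊢
      omega

theorem fin_eq_zero_or_one_or_two_le (hk : 2 ≤ k) (j : Fin k) :
    j = ⟨0, Nat.zero_lt_of_lt hk⟩ ∨ j = ⟨1, hk⟩ ∨ 2 ≤ (j : ℕ) := by
  simp only [Fin.ext_iff]
  omega

end Tuples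

section MatchingField

variable {n k ℓ : ℕ}

noncomputable def colExp (ℓ : ℕ) (J : Fin k → ℕ) : (ℕ × ℕ) →₀ ℕ :=
  ∑ i, single (mfRow ℓ J i, J i) 1

noncomputable def tabExp (ℓ : ℕ) : (PlVar n k →₀ ℕ) →ₗ[ℕ] (ℕ × ℕ) →₀ ℕ :=
  linearCombination ℕ fun J => colExp ℓ J.val

theorem phiMF_eq_toricMap (K : Type*) [Field K] (n k ℓ : ℕ) :
    phiMF K n k ℓ = toricMap K fun J : PlVar n k => colExp ℓ J.val := by
  simp only [phiMF, toricMap, colExp, monomial_sum_one]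
  rfl

theorem monomialFree_restrictIdeal_ker_phiMF_iff (K : Type*) [Field K] (T : Set (PlVar n k)) :
    MonomialFree (restrictIdeal (RingHom.ker (phiMF K n k ℓ)) T) ↔
      FiberClosed (fun J : PlVar n k => colExp ℓ J.val) T := by
  rw [restrictIdeal, phiMF_eq_toricMap]
  exact monomialFree_comap_ker_toricMap_sup_span_iff _ T

theorem nSmall_eq_one_iff (hk : 2 ≤ k) {J : Fin k → ℕ} (hJ : StrictMono J) :
    nSmall ℓ J = 1 ↔ J ⟨0, Nat.zero_lt_of_lt hk⟩ ≤ ℓ ∧ ℓ < J ⟨1, hk⟩ := by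
  rw [nSmall, Finset.card_eq_one]
  constructor
  · rintro ⟨a, ha⟩
    have hmem : ∀ s, J s ≤ ℓ ↔ s = a := fun s => by simpa using Finset.ext_iff.mp ha s
    have h0 : J ⟨0, Nat.zero_lt_of_lt hk⟩ ≤ ℓ :=
      (hJ.monotone (Nat.zero_le (a : ℕ))).trans ((hmem a).2 rfl)
    refine ⟨h0, not_le.mp fun h1 => ?_⟩
    have := ((hmem _).1 h1).trans ((hmem _).1 h0).symm
    simp [Fin.ext_iff] at this
  · rintro ⟨h0, h1⟩
    refine ⟨⟨0, Nat.zero_lt_of_lt hk⟩, Finset.ext fun s => ?_⟩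
    simp only [Finset.mem_filter, Finset.mem_univ, true_and, Finset.mem_singleton]
    refine ⟨fun hs => Fin.ext (Nat.eq_zero_of_not_pos fun hpos => ?_), fun hs => hs ▸ h0⟩
    exact (h1.trans_le (hJ.monotone (show (⟨1, hk⟩ : Fin k) ≤ s from hpos))).not_ge hs

theorem mfRow_of_two_le (J : Fin k → ℕ) {i : Fin k} (hi : 2 ≤ (i : ℕ)) :
    mfRow ℓ J i = i + 1 := by
  simp only [mfRow]
  split_ifs <;> omega

theorem mfRow_zero (hk : 2 ≤ k) (J : Fin k → ℕ) :
    mfRow ℓ J ⟨0, Nat.zero_lt_of_lt hk⟩ = if nSmall ℓ J = 1 then 2 else 1 := by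
  simp [mfRow, hk]

theorem mfRow_one (hk : 2 ≤ k) (J : Fin k → ℕ) :
    mfRow ℓ J ⟨1, hk⟩ = if nSmall ℓ J = 1 then 1 else 2 := by
  simp [mfRow, hk]

theorem tabExp_apply_ne_zero_iff {μ : PlVar n k →₀ ℕ} {p : ℕ × ℕ} :
    tabExp ℓ μ p ≠ 0 ↔ ∃ C ∈ μ.support, ∃ j, (mfRow ℓ C.val j, C.val j) = p := by
  simp [tabExp, colExp, linearCombination_apply, Finsupp.sum, Finsupp.finsetSum_apply,
    Finset.sum_eq_zero_iff, single_apply]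

theorem exists_mfRow_eq_of_tabExp_eq {μ ν : PlVar n k →₀ ℕ} (h : tabExp ℓ μ = tabExp ℓ ν)
    {J : PlVar n k} (hJ : J ∈ μ.support) (i : Fin k) :
    ∃ C ∈ ν.support, ∃ j, mfRow ℓ C.val j = mfRow ℓ J.val i ∧ C.val j = J.val i := by
  have hJi : tabExp ℓ ν (mfRow ℓ J.val i, J.val i) ≠ 0 :=
    h ▸ tabExp_apply_ne_zero_iff.mpr ⟨J, hJ, i, rfl⟩
  obtain ⟨C, hC, j, hj⟩ := tabExp_apply_ne_zero_iff.mp hJi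
  exact ⟨C, hC, j, Prod.ext_iff.mp hj⟩

end MatchingField

section Bounds

variable {n k ℓ : ℕ} {w : PlVar n k} {μ ν : PlVar n k →₀ ℕ} {J : PlVar n k}

theorem exists_apply_eq_of_tabExp_eq (h : tabExp ℓ μ = tabExp ℓ ν) (hJ : J ∈ μ.support)
    {i : Fin k} (hi : 2 ≤ (i : ℕ)) : ∃ C ∈ ν.support, C.val i = J.val i := by
  obtain ⟨C, hC, j, hrow, hval⟩ := exists_mfRow_eq_of_tabExp_eq h hJ i
  rw [mfRow_of_two_le _ hi] at hrow
  have hji : j = i := by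
    simp only [mfRow] at hrow
    ext
    split_ifs at hrow <;> omega
  exact ⟨C, hC, hji ▸ hval⟩

theorem exists_eq_fst_of_tabExp_eq (hk : 2 ≤ k) (h : tabExp ℓ μ = tabExp ℓ ν)
    (hJ : J ∈ μ.support) :
    ∃ C ∈ ν.support,
      (C.val ⟨0, Nat.zero_lt_of_lt hk⟩ = J.val ⟨0, Nat.zero_lt_of_lt hk⟩ ∧
        (nSmall ℓ C.val = 1 ↔ nSmall ℓ J.val = 1)) ∨
      (C.val ⟨1, hk⟩ = J.val ⟨0, Nat.zero_lt_of_lt hk⟩ ∧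
        ¬(nSmall ℓ C.val = 1 ↔ nSmall ℓ J.val = 1)) := by
  obtain ⟨C, hC, j, hrow, hval⟩ := exists_mfRow_eq_of_tabExp_eq h hJ ⟨0, Nat.zero_lt_of_lt hk⟩
  refine ⟨C, hC, ?_⟩
  rw [mfRow_zero hk] at hrow
  rcases fin_eq_zero_or_one_or_two_le hk j with rfl | rfl | hj
  · rw [mfRow_zero hk] at hrow
    split_ifs at hrow <;> tauto
  · rw [mfRow_one hk] at hrow
    split_ifs at hrow <;> tauto
  · rw [mfRow_of_two_le _ hj] at hrow
    split_ifs at hrow <;> omega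

theorem exists_eq_snd_of_tabExp_eq (hk : 2 ≤ k) (h : tabExp ℓ μ = tabExp ℓ ν)
    (hJ : J ∈ μ.support) :
    ∃ C ∈ ν.support,
      (C.val ⟨1, hk⟩ = J.val ⟨1, hk⟩ ∧ (nSmall ℓ C.val = 1 ↔ nSmall ℓ J.val = 1)) ∨
      (C.val ⟨0, Nat.zero_lt_of_lt hk⟩ = J.val ⟨1, hk⟩ ∧
        ¬(nSmall ℓ C.val = 1 ↔ nSmall ℓ J.val = 1)) := by
  obtain ⟨C, hC, j, hrow, hval⟩ := exists_mfRow_eq_of_tabExp_eq h hJ ⟨1, hk⟩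
  refine ⟨C, hC, ?_⟩
  rw [mfRow_one hk] at hrow
  rcases fin_eq_zero_or_one_or_two_le hk j with rfl | rfl | hj
  · rw [mfRow_zero hk] at hrow
    split_ifs at hrow <;> tauto
  · rw [mfRow_one hk] at hrow
    split_ifs at hrow <;> tauto
  · rw [mfRow_of_two_le _ hj] at hrow
    split_ifs at hrow <;> omega

theorem le_of_two_le_of_tabExp_eq (hν : ↑ν.support ⊆ TleW w) (h : tabExp ℓ μ = tabExp ℓ ν)
    (hJ : J ∈ μ.support) {i : Fin k} (hi : 2 ≤ (i : ℕ)) : J.val i ≤ w.val i := by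
  obtain ⟨C, hC, hCi⟩ := exists_apply_eq_of_tabExp_eq h hJ hi
  exact hCi ▸ hν hC i

theorem snd_le_of_tabExp_eq (hk : 2 ≤ k) (hν : ↑ν.support ⊆ TleW w)
    (h : tabExp ℓ μ = tabExp ℓ ν) (hJ : J ∈ μ.support) : J.val ⟨1, hk⟩ ≤ w.val ⟨1, hk⟩ := by
  obtain ⟨C, hC, hsrc⟩ := exists_eq_snd_of_tabExp_eq hk h hJ
  have hC0 := hν hC ⟨0, Nat.zero_lt_of_lt hk⟩
  have hC1 := hν hC ⟨1, hk⟩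
  have hw : w.val ⟨0, Nat.zero_lt_of_lt hk⟩ < w.val ⟨1, hk⟩ := w.2.1 (by simp [Fin.lt_def])
  omega

theorem fst_le_of_tabExp_eq (hk : 2 ≤ k) (hν : ↑ν.support ⊆ TleW w)
    (h : tabExp ℓ μ = tabExp ℓ ν) (hJ : J ∈ μ.support)
    (hw : w.val ⟨0, Nat.zero_lt_of_lt hk⟩ = ℓ ∨ w.val ⟨1, hk⟩ ≤ ℓ ∨
      w.val ⟨1, hk⟩ = w.val ⟨0, Nat.zero_lt_of_lt hk⟩ + 1) :
    J.val ⟨0, Nat.zero_lt_of_lt hk⟩ ≤ w.val ⟨0, Nat.zero_lt_of_lt hk⟩ := by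
  have hJ1 := snd_le_of_tabExp_eq hk hν h hJ
  have hJ01 : J.val ⟨0, Nat.zero_lt_of_lt hk⟩ < J.val ⟨1, hk⟩ := J.2.1 (by simp [Fin.lt_def])
  -- The first entry of `J` is the first entry of a column `C` of `ν`, or its second entry
  -- when exactly one of `J` and `C` is swapped; when `w₁ = ℓ` the column `D` of `ν`
  -- providing the second entry of `J` excludes the latter.
  obtain ⟨C, hC, hsrc⟩ := exists_eq_fst_of_tabExp_eq hk h hJ
  obtain ⟨D, hD, hsrc'⟩ := exists_eq_snd_of_tabExp_eq hk h hJ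
  rw [nSmall_eq_one_iff hk C.2.1, nSmall_eq_one_iff hk J.2.1] at hsrc
  rw [nSmall_eq_one_iff hk D.2.1, nSmall_eq_one_iff hk J.2.1] at hsrc'
  have hC0 := hν hC ⟨0, Nat.zero_lt_of_lt hk⟩
  have hC1 := hν hC ⟨1, hk⟩
  have hD0 := hν hD ⟨0, Nat.zero_lt_of_lt hk⟩
  omega

theorem weight_colExp {M : Type*} [AddCommMonoid M] (f : ℕ × ℕ → M) (J : Fin k → ℕ) :
    weight f (colExp ℓ J) = ∑ i, f (mfRow ℓ J i, J i) := by
  simp [colExp, weight_single]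

theorem weight_colExp_eq_one_iff (hk : 2 ≤ k) (J : PlVar n k) :
    weight (fun p : ℕ × ℕ => if p.2 = 1 then 1 else 0) (colExp ℓ J.val) =
      if J.val ⟨0, Nat.zero_lt_of_lt hk⟩ = 1 then 1 else 0 := by
  rw [weight_colExp, Finset.sum_eq_single ⟨0, Nat.zero_lt_of_lt hk⟩ (fun i _ hi => ?_) (by simp)]
  have h0 := (J.2.2 ⟨0, Nat.zero_lt_of_lt hk⟩).1
  have hlt : J.val ⟨0, Nat.zero_lt_of_lt hk⟩ < J.val i :=
    J.2.1 (by rw [Fin.lt_def, Fin.val_mk]; simp only [ne_eq, Fin.ext_iff] at hi; omega)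
  rw [if_neg (by omega)]

theorem fst_eq_one_of_tabExp_eq (hk : 2 ≤ k) (hν : ↑ν.support ⊆ TleW w)
    (h : tabExp ℓ μ = tabExp ℓ ν) (hJ : J ∈ μ.support)
    (hw : w.val ⟨0, Nat.zero_lt_of_lt hk⟩ = 1) : J.val ⟨0, Nat.zero_lt_of_lt hk⟩ = 1 := by
  classical
  have hweight : ∀ f : ℕ × ℕ → ℕ, ∑ C ∈ μ.support, μ C • weight f (colExp ℓ C.val) =
      ∑ C ∈ ν.support, ν C • weight f (colExp ℓ C.val) := fun f => by
    simpa [tabExp, weight_linearCombination, Finsupp.sum] using congrArg (weight f) h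
  have hdeg : ∑ C ∈ μ.support, μ C = ∑ C ∈ ν.support, ν C := by
    have := hweight 1
    simp only [weight_colExp, Pi.one_apply, Finset.sum_const, Finset.card_univ, Fintype.card_fin,
      smul_eq_mul, mul_one, ← Finset.sum_mul] at this
    exact Nat.eq_of_mul_eq_mul_right (by omega) this
  have hones := hweight fun p => if p.2 = 1 then 1 else 0
  simp only [weight_colExp_eq_one_iff hk] at hones
  have hν1 : ∑ C ∈ ν.support, ν C • (if C.val ⟨0, Nat.zero_lt_of_lt hk⟩ = 1 then 1 else 0) =
      ∑ C ∈ ν.support, ν C := Finset.sum_congr rfl fun C hC => by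
    have hC0 : C.val ⟨0, Nat.zero_lt_of_lt hk⟩ ≤ 1 :=
      (hν hC ⟨0, Nat.zero_lt_of_lt hk⟩).trans_eq hw
    rw [if_pos (le_antisymm hC0 (C.2.2 _).1), smul_eq_mul, mul_one]
  rw [hν1, ← hdeg] at hones
  have hJ1 := (Finset.sum_eq_sum_iff_of_le fun C _ => ?_).mp hones J hJ
  · by_contra hne
    rw [if_neg hne, smul_zero] at hJ1
    exact Finsupp.mem_support_iff.mp hJ hJ1.symm
  · split_ifs <;> simp

theorem snd_eq_fst_add_one_of_fst_eq (hk : 2 ≤ k) (w : PlVar n k)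
    (hw : w.val ⟨0, Nat.zero_lt_of_lt hk⟩ = n - k + 1) :
    w.val ⟨1, hk⟩ = w.val ⟨0, Nat.zero_lt_of_lt hk⟩ + 1 := by
  have hspread := apply_add_sub_le_of_strictMono w.2.1
    (show (⟨1, hk⟩ : Fin k) ≤ ⟨k - 1, by omega⟩ by simp [Fin.le_def]; omega)
  have h01 : w.val ⟨0, Nat.zero_lt_of_lt hk⟩ < w.val ⟨1, hk⟩ := w.2.1 (by simp [Fin.lt_def])
  have hlast := (w.2.2 ⟨k - 1, by omega⟩).2
  simp only at hspread
  omega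

theorem fiberClosed_TleW (hk : 2 ≤ k)
    (hw : w.val ⟨0, Nat.zero_lt_of_lt hk⟩ = 1 ∨ w.val ⟨0, Nat.zero_lt_of_lt hk⟩ = ℓ ∨
      w.val ⟨0, Nat.zero_lt_of_lt hk⟩ = n - k + 1 ∨ w.val ⟨1, hk⟩ ≤ ℓ ∨
      w.val ⟨1, hk⟩ = w.val ⟨0, Nat.zero_lt_of_lt hk⟩ + 1) :
    FiberClosed (fun J : PlVar n k => colExp ℓ J.val) (TleW w) := by
  intro μ ν hν h J hJ
  have hfst : J.val ⟨0, Nat.zero_lt_of_lt hk⟩ ≤ w.val ⟨0, Nat.zero_lt_of_lt hk⟩ := by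
    rcases hw with hw | hw | hw | hw
    · exact (fst_eq_one_of_tabExp_eq hk hν h hJ hw).trans_le (w.2.2 _).1
    · exact fst_le_of_tabExp_eq hk hν h hJ (.inl hw)
    · exact fst_le_of_tabExp_eq hk hν h hJ (.inr (.inr (snd_eq_fst_add_one_of_fst_eq hk w hw)))
    · exact fst_le_of_tabExp_eq hk hν h hJ (.inr hw)
  intro s
  rcases fin_eq_zero_or_one_or_two_le hk s with rfl | rfl | hs
  · exact hfst
  · exact snd_le_of_tabExp_eq hk hν h hJ
  · exact le_of_two_le_of_tabExp_eq hν h hJ hs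

end Bounds

section Relations

variable {n k ℓ : ℕ}

def withHead (w : Fin k → ℕ) (x y : ℕ) : Fin k → ℕ :=
  fun s => if (s : ℕ) = 0 then x else if (s : ℕ) = 1 then y else w s

noncomputable def headExp (ℓ x y : ℕ) : (ℕ × ℕ) →₀ ℕ :=
  if x ≤ ℓ ∧ ℓ < y then single (1, y) 1 + single (2, x) 1 else single (1, x) 1 + single (2, y) 1

theorem strictMono_withHead (hk : 2 ≤ k) {w : Fin k → ℕ} (hw : StrictMono w) {x y : ℕ}
    (hxy : x < y) (hy : y ≤ w ⟨1, hk⟩) : StrictMono (withHead w x y) := by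
  intro s t hst
  have hwst := hw hst
  have hw1t : 2 ≤ (t : ℕ) → w ⟨1, hk⟩ < w t := fun ht =>
    hw (by rw [Fin.lt_def, Fin.val_mk]; omega)
  rw [Fin.lt_def] at hst
  simp only [withHead]
  split_ifs <;> omega

theorem isIdx_withHead (hk : 2 ≤ k) {w : Fin k → ℕ} (hw : IsIdx n k w) {x y : ℕ}
    (hx : 1 ≤ x) (hxy : x < y) (hy : y ≤ w ⟨1, hk⟩) : IsIdx n k (withHead w x y) := by
  refine ⟨strictMono_withHead hk hw.1 hxy hy, fun s => ?_⟩
  have hs := hw.2 s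
  have h1 := hw.2 ⟨1, hk⟩
  simp only [withHead]
  split_ifs <;> omega

theorem tupLe_withHead_iff (hk : 2 ≤ k) {w : Fin k → ℕ} {x y : ℕ} :
    TupLe (withHead w x y) w ↔ x ≤ w ⟨0, Nat.zero_lt_of_lt hk⟩ ∧ y ≤ w ⟨1, hk⟩ := by
  refine ⟨fun h => ⟨by simpa [withHead] using h ⟨0, Nat.zero_lt_of_lt hk⟩,
    by simpa [withHead] using h ⟨1, hk⟩⟩, fun ⟨hx, hy⟩ s => ?_⟩
  rcases fin_eq_zero_or_one_or_two_le hk s with rfl | rfl | hs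
  · simpa [withHead] using hx
  · simpa [withHead] using hy
  · simp only [withHead]
    split_ifs <;> omega

theorem colExp_withHead (hk : 2 ≤ k) {w : Fin k → ℕ} (hw : StrictMono w) {x y : ℕ}
    (hxy : x < y) (hy : y ≤ w ⟨1, hk⟩) :
    colExp ℓ (withHead w x y) = headExp ℓ x y +
      ∑ i ∈ Finset.univ.filter (fun i : Fin k => 2 ≤ i.val), single ((i : ℕ) + 1, w i) 1 := by
  have hhead : Finset.univ.filter (fun i : Fin k => ¬ 2 ≤ i.val) =
      {⟨0, Nat.zero_lt_of_lt hk⟩, ⟨1, hk⟩} := by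
    ext i
    simp only [Finset.mem_filter, Finset.mem_univ, true_and, Finset.mem_insert,
      Finset.mem_singleton, Fin.ext_iff]
    omega
  rw [colExp, ← Finset.sum_filter_not_add_sum_filter _ (fun i : Fin k => 2 ≤ i.val), hhead,
    Finset.sum_pair (by simp [Fin.ext_iff]), mfRow_zero hk, mfRow_one hk]
  congr 1
  · have hswap := nSmall_eq_one_iff (ℓ := ℓ) hk (strictMono_withHead hk hw hxy hy)
    simp only [withHead, if_true, one_ne_zero, if_false] at hswap ⊢
    by_cases hs : x ≤ ℓ ∧ ℓ < y
    · simp [hswap.mpr hs, headExp, hs, add_comm]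
    · simp [mt hswap.mp hs, headExp, hs]
  · refine Finset.sum_congr rfl fun i hi => ?_
    have hi2 := (Finset.mem_filter.mp hi).2
    rw [mfRow_of_two_le _ hi2]
    simp only [withHead]
    rw [if_neg (by omega), if_neg (by omega)]

def headCol (hk : 2 ≤ k) (w : PlVar n k) (x y : ℕ) (hx : 1 ≤ x) (hxy : x < y)
    (hy : y ≤ w.val ⟨1, hk⟩) : PlVar n k :=
  ⟨withHead w.val x y, isIdx_withHead hk w.2 hx hxy hy⟩

theorem colExp_headCol (hk : 2 ≤ k) (w : PlVar n k) {x y : ℕ} (hx : 1 ≤ x) (hxy : x < y)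
    (hy : y ≤ w.val ⟨1, hk⟩) :
    colExp ℓ (headCol hk w x y hx hxy hy).val = headExp ℓ x y +
      ∑ i ∈ Finset.univ.filter (fun i : Fin k => 2 ≤ i.val), single ((i : ℕ) + 1, w.val i) 1 :=
  colExp_withHead hk w.2.1 hxy hy

theorem headCol_mem_TleW_iff (hk : 2 ≤ k) (w : PlVar n k) {x y : ℕ} (hx : 1 ≤ x)
    (hxy : x < y) (hy : y ≤ w.val ⟨1, hk⟩) :
    headCol hk w x y hx hxy hy ∈ TleW w ↔ x ≤ w.val ⟨0, Nat.zero_lt_of_lt hk⟩ :=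
  (tupLe_withHead_iff hk).trans (and_iff_left hy)

theorem not_fiberClosed_of_colExp_add_eq {T : Set (PlVar n k)} {A B C D : PlVar n k}
    (hA : A ∈ T) (hB : B ∈ T) (hC : C ∉ T)
    (h : colExp ℓ C.val + colExp ℓ D.val = colExp ℓ A.val + colExp ℓ B.val) :
    ¬ FiberClosed (fun J : PlVar n k => colExp ℓ J.val) T := by
  classical
  intro hclosed
  refine hC (hclosed (single C 1 + single D 1) (single A 1 + single B 1) ?_ ?_ ?_)
  · intro J hJ
    rcases Finset.mem_union.mp (support_add hJ) with hJ | hJ <;>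
      obtain rfl := Finset.mem_singleton.mp (support_single_subset hJ) <;> assumption
  · simpa [linearCombination_single] using h
  · simp [Finsupp.mem_support_iff]

theorem not_fiberClosed_TleW_of_lt (hk : 2 ≤ k) {w : PlVar n k}
    (hw0 : 2 ≤ w.val ⟨0, Nat.zero_lt_of_lt hk⟩) (hlt : w.val ⟨0, Nat.zero_lt_of_lt hk⟩ < ℓ)
    (hw1 : ℓ < w.val ⟨1, hk⟩) :
    ¬ FiberClosed (fun J : PlVar n k => colExp ℓ J.val) (TleW w) := by
  set a := w.val ⟨0, Nat.zero_lt_of_lt hk⟩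
  refine not_fiberClosed_of_colExp_add_eq
    (A := headCol hk w a (ℓ + 1) (by omega) (by omega) (by omega))
    (B := headCol hk w (a - 1) (a + 1) (by omega) (by omega) (by omega))
    (C := headCol hk w (a + 1) (ℓ + 1) (by omega) (by omega) (by omega))
    (D := headCol hk w (a - 1) a (by omega) (by omega) (by omega))
    ((headCol_mem_TleW_iff ..).mpr le_rfl) ((headCol_mem_TleW_iff ..).mpr (by omega))
    (fun hC => by have := (headCol_mem_TleW_iff ..).mp hC; omega) ?_
  have hA : a ≤ ℓ ∧ ℓ < ℓ + 1 := by omega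
  have hB : ¬(a - 1 ≤ ℓ ∧ ℓ < a + 1) := by omega
  have hC : a + 1 ≤ ℓ ∧ ℓ < ℓ + 1 := by omega
  have hD : ¬(a - 1 ≤ ℓ ∧ ℓ < a) := by omega
  simp only [colExp_headCol, headExp]
  rw [if_pos hA, if_neg hB, if_pos hC, if_neg hD]
  abel

theorem not_fiberClosed_TleW_of_gt (hk : 2 ≤ k) (hℓ : 1 ≤ ℓ) {w : PlVar n k}
    (hgt : ℓ < w.val ⟨0, Nat.zero_lt_of_lt hk⟩)
    (hw1 : w.val ⟨0, Nat.zero_lt_of_lt hk⟩ + 2 ≤ w.val ⟨1, hk⟩) :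
    ¬ FiberClosed (fun J : PlVar n k => colExp ℓ J.val) (TleW w) := by
  set a := w.val ⟨0, Nat.zero_lt_of_lt hk⟩
  refine not_fiberClosed_of_colExp_add_eq
    (A := headCol hk w ℓ (a + 1) hℓ (by omega) (by omega))
    (B := headCol hk w a (a + 2) (by omega) (by omega) hw1)
    (C := headCol hk w (a + 1) (a + 2) (by omega) (by omega) hw1)
    (D := headCol hk w ℓ a hℓ hgt (by omega))
    ((headCol_mem_TleW_iff ..).mpr hgt.le) ((headCol_mem_TleW_iff ..).mpr le_rfl)
    (fun hC => by have := (headCol_mem_TleW_iff ..).mp hC; omega) ?_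
  have hA : ℓ ≤ ℓ ∧ ℓ < a + 1 := by omega
  have hB : ¬(a ≤ ℓ ∧ ℓ < a + 2) := by omega
  have hC : ¬(a + 1 ≤ ℓ ∧ ℓ < a + 2) := by omega
  have hD : ℓ ≤ ℓ ∧ ℓ < a := by omega
  simp only [colExp_headCol, headExp]
  rw [if_pos hA, if_neg hB, if_neg hC, if_pos hD]
  abel

end Relations

/-- For `ℓ ∈ {1, …, n-k+1}` the restricted ideal
`G_{k,n,ℓ}|_w = ker(φ_ℓ)|_{{I : I ≤ w}}` is monomial-free if and only if
`w_1 ∈ {1, ℓ, n-k+1}` or `w_2 ∈ {1, …, ℓ} ∪ {w_1 + 1}`. -/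
theorem statement_5 (K : Type*) [Field K] (n k ℓ : ℕ) (hk : 2 ≤ k)
    (hℓ1 : 1 ≤ ℓ) (w : PlVar n k) :
    MonomialFree (restrictIdeal (RingHom.ker (phiMF K n k ℓ)) (TleW w)) ↔
      (w.val ⟨0, by omega⟩ = 1 ∨ w.val ⟨0, by omega⟩ = ℓ ∨
        w.val ⟨0, by omega⟩ = n - k + 1 ∨
        w.val ⟨1, by omega⟩ ≤ ℓ ∨ w.val ⟨1, by omega⟩ = w.val ⟨0, by omega⟩ + 1) := by
  rw [monomialFree_restrictIdeal_ker_phiMF_iff]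
  refine ⟨fun hclosed => ?_, fiberClosed_TleW hk⟩
  by_contra! hw
  have hw0 : 1 ≤ w.val ⟨0, by omega⟩ := (w.2.2 _).1
  have hw01 : w.val ⟨0, by omega⟩ < w.val ⟨1, hk⟩ := w.2.1 (by simp [Fin.lt_def])
  rcases hw.2.1.lt_or_gt with hlt | hgt
  · exact not_fiberClosed_TleW_of_lt hk (by omega) hlt (by omega) hclosed
  · exact not_fiberClosed_TleW_of_gt hk hℓ1 hgt (by omega) hclosed
end

section
/- Let k < n be positive integers, K a field, and v ∈ I_{k,n}. The restricted ideal G_{k,n,0}|^v = ker(φ_0)|_{{I : v ≤ I}} is the zero ideal if and only if w_0 v ∈ Z_{k,n}, where Z_{k,n} = {{1,2,...,k-1} ∪ {i} : k ≤ i ≤ n} ∪ {{1,...,k+1} \ {i} : 1 ≤ i ≤ k-1} and w_0 v = {n+1-i : i ∈ v}. -/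
open MvPolynomial

/-! On the upper set `T = {I : v ≤ I}` the restriction of `ker φ₀` is the kernel of `φ₀` restricted
to `K[P_I : I ∈ T]`: killing the variables `x_{s,c}` with `c < v_s` annihilates the image of every
`P_I` with `I ∉ T` and fixes the others. As `φ₀` is a monomial map, that kernel vanishes iff the
exponent vectors of the diagonal monomials of `T` are `ℕ`-linearly independent. Incomparable
`I, J ∈ T` give the relation `P_I P_J = P_{I ⊓ J} P_{I ⊔ J}`; conversely, in a finite chain the
least element lies, in some row, strictly below all others, which makes the exponents triangular.
Finally `T` is a chain exactly when `v` agrees with `{n-k+1, …, n}` outside its first entry, or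
`v ⊆ {n-k, …, n}`, and this is the condition `w₀ v ∈ Z_{k,n}`. -/

open Finset

lemma aeval_monomial_one_eq_mapDomainAlgHom {R σ τ : Type*} [CommSemiring R]
    (g : τ → σ →₀ ℕ) :
    aeval (R := R) (fun x => monomial (g x) (1 : R)) =
      AddMonoidAlgebra.mapDomainAlgHom R R (Finsupp.linearCombination ℕ g).toAddMonoidHom := by
  refine algHom_ext fun x => ?_
  rw [aeval_X]
  simp [MvPolynomial, X, monomial]

lemma ker_aeval_monomial_one_eq_bot_iff {R σ τ : Type*} [CommRing R] [Nontrivial R]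
    (g : τ → σ →₀ ℕ) :
    RingHom.ker (aeval (R := R) fun x => monomial (g x) (1 : R)) = ⊥ ↔
      LinearIndependent ℕ g := by
  rw [← RingHom.injective_iff_ker_eq_bot, aeval_monomial_one_eq_mapDomainAlgHom]
  refine ⟨fun h m m' hm => ?_, fun h => AddMonoidAlgebra.mapDomain_injective h⟩
  have := @h (monomial m 1) (monomial m' 1) (by simp [MvPolynomial, monomial, hm])
  simpa [monomial_eq_monomial_iff] using this

lemma le_of_le_or_le_of_sum_le {σ : Type*} [Fintype σ] {x y : σ → ℕ} (h : x ≤ y ∨ y ≤ x)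
    (hsum : ∑ r, x r ≤ ∑ r, y r) : x ≤ y := by
  rcases h with h | h
  · exact h
  · have heq := (sum_eq_sum_iff_of_le fun r (_ : r ∈ univ) => h r).1
      (le_antisymm (sum_le_sum fun r _ => h r) hsum)
    exact fun r => (heq r (mem_univ r)).ge

lemma exists_lt_of_forall_lt_of_total {ι σ : Type*} [Fintype σ] [Nonempty σ]
    {t : ι → σ → ℕ} (htot : ∀ i j, t i ≤ t j ∨ t j ≤ t i) {a : ι} {s : Finset ι}
    (hlt : ∀ x ∈ s, t a < t x) : ∃ r, ∀ x ∈ s, t a r < t x r := by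
  rcases s.eq_empty_or_nonempty with rfl | hs
  · simp
  obtain ⟨b, hb, hbmin⟩ := s.exists_min_image (fun i => ∑ r, t i r) hs
  obtain ⟨r, hr⟩ := (Pi.lt_def.1 (hlt b hb)).2
  exact ⟨r, fun x hx => hr.trans_le (le_of_le_or_le_of_sum_le (htot b x) (hbmin x hx) r)⟩

noncomputable def diagExp {k : ℕ} (J : Fin k → ℕ) : ℕ × ℕ →₀ ℕ :=
  ∑ s : Fin k, Finsupp.single ((s : ℕ) + 1, J s) 1

lemma diagExp_apply {k : ℕ} (J : Fin k → ℕ) (s : Fin k) (c : ℕ) :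
    diagExp J ((s : ℕ) + 1, c) = if J s = c then 1 else 0 := by
  rw [diagExp, Finsupp.finsetSum_apply, sum_eq_single s]
  · simp [Finsupp.single_apply]
  · intro r _ hrs
    simp [Fin.val_inj, hrs]
  · simp

lemma diagExp_inf_add_diagExp_sup {k : ℕ} (x y : Fin k → ℕ) :
    diagExp (x ⊓ y) + diagExp (x ⊔ y) = diagExp x + diagExp y := by
  simp only [diagExp, ← sum_add_distrib]
  refine sum_congr rfl fun s _ => ?_
  rcases le_total (x s) (y s) with h | h
  · simp [h]
  · simp [h, add_comm]

lemma linearIndependent_diagExp_of_total {ι : Type*} {k : ℕ} (hk : 0 < k)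
    {t : ι → Fin k → ℕ} (ht : Function.Injective t) (htot : ∀ i j, t i ≤ t j ∨ t j ≤ t i) :
    LinearIndependent ℕ fun i => diagExp (t i) := by
  classical
  have : Nonempty (Fin k) := ⟨⟨0, hk⟩⟩
  rw [linearIndependent_iff'ₛ]
  intro s
  induction s using Finset.induction_on_min_value (fun i => ∑ r, t i r) with
  | empty => simp
  | insert a s has hmin ih =>
    intro f g hfg
    have hlt : ∀ x ∈ s, t a < t x := fun x hx =>
      lt_of_le_of_ne (le_of_le_or_le_of_sum_le (htot a x) (hmin x hx))
        (ht.ne (ne_of_mem_of_not_mem hx has).symm)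
    obtain ⟨r, hr⟩ := exists_lt_of_forall_lt_of_total htot hlt
    rw [sum_insert has, sum_insert has] at hfg
    -- among the `t x`, `x ∈ insert a s`, only `t a` has the entry `t a r` in row `r`
    have hfa : f a = g a := by
      have hvanish : ∀ x ∈ s, t x r ≠ t a r := fun x hx => (hr x hx).ne'
      simpa [Finsupp.finsetSum_apply, diagExp_apply, sum_ite, filter_false_of_mem hvanish]
        using DFunLike.congr_fun hfg ((r : ℕ) + 1, t a r)
    rw [hfa] at hfg
    intro i hi
    rcases mem_insert.1 hi with rfl | hi
    · exact hfa
    · exact ih f g (add_left_cancel hfg) i hi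

lemma Pi.le_or_le_of_forall_ne_eq {ι α : Type*} [LinearOrder α] {x y : ι → α} (i : ι)
    (h : ∀ j, j ≠ i → x j = y j) : x ≤ y ∨ y ≤ x := by
  rcases le_total (x i) (y i) with hi | hi
  · refine Or.inl fun j => ?_
    by_cases hj : j = i
    · exact hj ▸ hi
    · exact (h j hj).le
  · refine Or.inr fun j => ?_
    by_cases hj : j = i
    · exact hj ▸ hi
    · exact (h j hj).ge

lemma mem_iff_lt_card_of_isLowerSet {k : ℕ} {A : Finset (Fin k)}
    (hA : IsLowerSet (A : Set (Fin k))) (s : Fin k) : s ∈ A ↔ (s : ℕ) < #A := by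
  constructor
  · intro hs
    have : Iic s ⊆ A := fun t ht => hA (mem_Iic.1 ht) hs
    simpa [Fin.card_Iic] using card_le_card this
  · intro hs
    by_contra hsA
    have : A ⊆ Iio s := fun t ht => mem_Iio.2 (lt_of_not_ge fun hst => hsA (hA hst ht))
    simpa [Fin.card_Iio] using (card_le_card this).trans_lt' hs

lemma StrictMono.add_sub_le_fin {k : ℕ} {f : Fin k → ℕ} (hf : StrictMono f) {a b : Fin k}
    (hab : a ≤ b) : f a + ((b : ℕ) - a) ≤ f b := by
  obtain ⟨d, hd⟩ : ∃ d, (b : ℕ) = a + d := ⟨b - a, by omega⟩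
  induction d generalizing b with
  | zero =>
    obtain rfl : a = b := Fin.ext (by omega)
    simp
  | succ d ih =>
    have hlt : (a : ℕ) + d < k := by omega
    have h1 := ih (b := ⟨a + d, hlt⟩) (Fin.le_def.2 (Nat.le_add_right _ _)) rfl
    have h2 := hf (show (⟨a + d, hlt⟩ : Fin k) < b from Fin.lt_def.2 (by dsimp only; omega))
    dsimp only at h1
    omega

namespace IsIdx

variable {n k : ℕ} {I J : Fin k → ℕ}

lemma succ_le (hJ : IsIdx n k J) (s : Fin k) : (s : ℕ) + 1 ≤ J s := by
  have h := hJ.1.add_sub_le_fin (a := ⟨0, s.pos⟩) (b := s) (Fin.le_def.2 (Nat.zero_le _))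
  have := (hJ.2 ⟨0, s.pos⟩).1
  simp only at h
  omega

lemma add_le (hJ : IsIdx n k J) (s : Fin k) : J s + k ≤ n + s + 1 := by
  have hs := s.isLt
  have h := hJ.1.add_sub_le_fin (a := s) (b := ⟨k - 1, by omega⟩)
    (Fin.le_def.2 (by dsimp only; omega))
  have := (hJ.2 ⟨k - 1, by omega⟩).2
  simp only at h
  omega

lemma inf (hI : IsIdx n k I) (hJ : IsIdx n k J) : IsIdx n k (I ⊓ J) :=
  ⟨fun _ _ hab => min_lt_min (hI.1 hab) (hJ.1 hab),
    fun s => ⟨le_min (hI.2 s).1 (hJ.2 s).1, (min_le_left _ _).trans (hI.2 s).2⟩⟩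

lemma sup_of_strictMono {w : Fin k → ℕ} (hI : IsIdx n k I) (hw : StrictMono w)
    (hwn : ∀ s, w s ≤ n) : IsIdx n k (I ⊔ w) :=
  ⟨fun _ _ hab => max_lt_max (hI.1 hab) (hw hab),
    fun s => ⟨(hI.2 s).1.trans (le_max_left _ _), max_le (hI.2 s).2 (hwn s)⟩⟩

/-- `J = {n-k, …, n} \ {n-k+p}`. -/
lemma exists_eq_band (hJ : IsIdx n k J) (hlow : ∀ s : Fin k, n - k + s ≤ J s) :
    ∃ p ≤ k, ∀ s : Fin k, J s = n - k + s + if p ≤ (s : ℕ) then 1 else 0 := by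
  classical
  set A := univ.filter fun s : Fin k => J s = n - k + s
  have hA : IsLowerSet (A : Set (Fin k)) := by
    intro s t hts hs
    simp only [A, coe_filter, mem_univ, true_and, Set.mem_ofPred_eq] at hs ⊢
    have := hJ.1.add_sub_le_fin hts
    have := hlow t
    omega
  refine ⟨#A, card_le_univ A |>.trans (by simp), fun s => ?_⟩
  have hmem : J s = n - k + s ↔ (s : ℕ) < #A := by
    rw [← mem_iff_lt_card_of_isLowerSet hA s]
    simp [A]
  have := hJ.add_le s
  have := hlow s
  split_ifs <;> omega

end IsIdx

section Restriction

variable {K : Type*} [Field K] {n k : ℕ}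

lemma mfRow_zero_s10 {J : Fin k → ℕ} (hJ : ∀ s, 1 ≤ J s) (i : Fin k) : mfRow 0 J i = i + 1 := by
  have : nSmall 0 J = 0 :=
    card_eq_zero.2 (filter_eq_empty_iff.2 fun s _ => by have := hJ s; omega)
  simp [mfRow, this]

lemma phiMF_zero_X (J : PlVar n k) :
    phiMF K n k 0 (X J) = ∏ s : Fin k, X ((s : ℕ) + 1, J.val s) := by
  simp [phiMF, mfRow_zero_s10 fun s => (J.2.2 s).1]

lemma prod_X_eq_monomial_diagExp (R : Type*) [CommSemiring R] (J : Fin k → ℕ) :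
    ∏ s : Fin k, (X ((s : ℕ) + 1, J s) : MvPolynomial (ℕ × ℕ) R) = monomial (diagExp J) 1 := by
  simp [diagExp, monomial_sum_one, X]

lemma phiMF_zero_comp_rename (T : Set (PlVar n k)) :
    (phiMF K n k 0).comp (rename ((↑) : T → PlVar n k)) =
      aeval fun J : T => monomial (diagExp J.1.val) (1 : K) :=
  algHom_ext fun J => by simp [phiMF_zero_X, prod_X_eq_monomial_diagExp]

/-- `hT` and `hTc` say `χ ∘ φ = φ|_T ∘ killCompl`, and `killCompl` kills the `P_I`, `I ∉ T`. -/
lemma restrictIdeal_ker_eq_ker_comp_rename {A : Type*} [CommRing A] [Algebra K A]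
    (φ : MvPolynomial (PlVar n k) K →ₐ[K] A) (T : Set (PlVar n k)) (χ : A →ₐ[K] A)
    (hT : ∀ J ∈ T, χ (φ (X J)) = φ (X J)) (hTc : ∀ J ∉ T, χ (φ (X J)) = 0) :
    restrictIdeal (RingHom.ker φ) T = RingHom.ker (φ.comp (rename ((↑) : T → PlVar n k))) := by
  classical
  set ι := rename (R := K) ((↑) : T → PlVar n k)
  set κ := killCompl (R := K) (Subtype.val_injective : Function.Injective ((↑) : T → PlVar n k))
    with hκdef
  have hκ : χ.comp φ = (φ.comp ι).comp κ := by
    refine algHom_ext fun J => ?_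
    by_cases hJ : J ∈ T
    · have : (X J : MvPolynomial _ K) = ι (X ⟨J, hJ⟩) := by rw [rename_X]
      rw [AlgHom.comp_apply, hT J hJ, AlgHom.comp_apply, this, killCompl_rename_app]
      rfl
    · rw [AlgHom.comp_apply, hTc J hJ, AlgHom.comp_apply, hκdef, killCompl, aeval_X,
        dif_neg (by simpa using hJ), map_zero]
  have hκ_span : Ideal.span (X '' {J | J ∉ T}) ≤ RingHom.ker κ := by
    rw [Ideal.span_le]
    rintro _ ⟨J, hJ, rfl⟩
    rw [SetLike.mem_coe, RingHom.mem_ker, hκdef, killCompl, aeval_X, dif_neg (by simpa using hJ)]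
  ext f
  refine ⟨fun hf => ?_, fun hf => Ideal.mem_comap.2 (Ideal.mem_sup_left hf)⟩
  obtain ⟨g, hg, h, hh, hgh⟩ := Submodule.mem_sup.1 (Ideal.mem_comap.1 hf)
  rw [RingHom.mem_ker] at hg ⊢
  calc (φ.comp ι) f = (φ.comp ι) (κ (ι f)) := by rw [killCompl_rename_app]
    _ = χ (φ (ι f)) := (AlgHom.congr_fun hκ (ι f)).symm
    _ = χ (φ h) := by rw [← hgh, map_add, map_add, hg, map_zero, zero_add]
    _ = (φ.comp ι) (κ h) := AlgHom.congr_fun hκ h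
    _ = 0 := by rw [RingHom.mem_ker.1 (hκ_span hh), map_zero]

lemma restrictIdeal_ker_phiMF_zero_tgeV (v : PlVar n k) :
    restrictIdeal (RingHom.ker (phiMF K n k 0)) (TgeV v) = kerPhiRes K n k 0 (TgeV v) := by
  classical
  set χ : MvPolynomial (ℕ × ℕ) K →ₐ[K] MvPolynomial (ℕ × ℕ) K :=
    aeval fun p => if ∃ s : Fin k, p.1 = s + 1 ∧ p.2 < v.val s then 0 else X p
  have hχ : ∀ (s : Fin k) c,
      χ (X ((s : ℕ) + 1, c)) = if c < v.val s then 0 else X ((s : ℕ) + 1, c) := by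
    intro s c
    simp [χ, Fin.val_inj]
  refine restrictIdeal_ker_eq_ker_comp_rename _ _ χ (fun J hJ => ?_) (fun J hJ => ?_) <;>
    rw [phiMF_zero_X, map_prod]
  · exact prod_congr rfl fun s _ => by rw [hχ, if_neg (not_lt.2 (hJ s))]
  · obtain ⟨s, hs⟩ : ∃ s, J.val s < v.val s := by simpa [TgeV, TupLe] using hJ
    exact prod_eq_zero (mem_univ s) (by rw [hχ, if_pos hs])

lemma kerPhiRes_zero_eq_bot_iff (T : Set (PlVar n k)) :
    kerPhiRes K n k 0 T = ⊥ ↔ LinearIndependent ℕ fun J : T => diagExp J.1.val := by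
  rw [kerPhiRes, phiMF_zero_comp_rename, ker_aeval_monomial_one_eq_bot_iff]

end Restriction

section Chain

variable {n k : ℕ}

lemma mem_tgeV {v J : PlVar n k} : J ∈ TgeV v ↔ v.val ≤ J.val := Iff.rfl

lemma linearIndependent_diagExp_tgeV_iff (hk : 0 < k) (v : PlVar n k) :
    (LinearIndependent ℕ fun J : TgeV v => diagExp J.1.val) ↔
      ∀ I ∈ TgeV v, ∀ J ∈ TgeV v, I.val ≤ J.val ∨ J.val ≤ I.val := by
  refine ⟨fun hli I hI J hJ => ?_, fun htot => linearIndependent_diagExp_of_total hk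
    (Subtype.val_injective.comp Subtype.val_injective) fun I J => htot _ I.2 _ J.2⟩
  by_contra hIJ
  let inf : TgeV v := ⟨⟨I.val ⊓ J.val, I.2.inf J.2⟩, mem_tgeV.2 (le_inf hI hJ)⟩
  let sup : TgeV v :=
    ⟨⟨I.val ⊔ J.val, I.2.sup_of_strictMono J.2.1 fun s => (J.2.2 s).2⟩,
      mem_tgeV.2 (le_sup_of_le_left hI)⟩
  have := @hli (Finsupp.single ⟨I, hI⟩ 1 + Finsupp.single ⟨J, hJ⟩ 1)
    (Finsupp.single inf 1 + Finsupp.single sup 1)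
    (by simp [inf, sup, diagExp_inf_add_diagExp_sup])
  rw [Finsupp.single_add_single_eq_single_add_single one_ne_zero one_ne_zero] at this
  rcases this with ⟨hinf, -⟩ | ⟨-, hsup, -⟩ | ⟨h2, -⟩
  · exact hIJ (Or.inl (inf_eq_left.1 (congrArg (fun x : TgeV v => x.1.val) hinf).symm))
  · exact hIJ (Or.inr (sup_eq_left.1 (congrArg (fun x : TgeV v => x.1.val) hsup).symm))
  · exact absurd h2 (by norm_num)

lemma tgeV_total_iff (v : PlVar n k) :
    (∀ I ∈ TgeV v, ∀ J ∈ TgeV v, I.val ≤ J.val ∨ J.val ≤ I.val) ↔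
      (∀ s : Fin k, 0 < (s : ℕ) → v.val s = n - k + 1 + s) ∨
        ∀ s : Fin k, n - k + s ≤ v.val s := by
  constructor
  · intro htot
    by_contra hC
    push Not at hC
    obtain ⟨⟨s₁, hs₁, hvs₁⟩, s₀, hvs₀⟩ := hC
    obtain ⟨z, hz⟩ : ∃ z : Fin k, (z : ℕ) = 0 := ⟨⟨0, s₀.pos⟩, rfl⟩
    have := v.2.succ_le z
    have := v.2.add_le z
    have := v.2.add_le s₁
    have := v.2.1.add_sub_le_fin (Fin.le_def.2 (by omega) : z ≤ s₀)
    set top : Fin k → ℕ := fun s => if (s : ℕ) = 0 then 0 else n - k + 1 + s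
    set bot : Fin k → ℕ := fun s => n - k + s
    have htop : IsIdx n k (v.val ⊔ top) := v.2.sup_of_strictMono
      (fun a b hab => by have := Fin.lt_def.1 hab; simp only [top]; split_ifs <;> omega)
      (fun s => by have := s.isLt; simp only [top]; split_ifs <;> omega)
    have hbot : IsIdx n k (v.val ⊔ bot) := v.2.sup_of_strictMono
      (fun a b hab => by have := Fin.lt_def.1 hab; simp only [bot]; omega)
      (fun s => by have := s.isLt; simp only [bot]; omega)
    -- `v ⊔ top` is larger in row `s₁`, `v ⊔ bot` in row `z`
    rcases htot ⟨_, htop⟩ (mem_tgeV.2 le_sup_left) ⟨_, hbot⟩ (mem_tgeV.2 le_sup_left) with h | h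
    · have := Pi.le_def.1 h s₁
      simp only [Pi.sup_apply, top, bot, if_neg hs₁.ne'] at this
      omega
    · have := Pi.le_def.1 h z
      simp only [Pi.sup_apply, top, bot, hz, if_true] at this
      omega
  · rintro (hL | hR) I hI J hJ
    · rcases Nat.eq_zero_or_pos k with rfl | hk
      · exact Or.inl fun s => s.elim0
      refine Pi.le_or_le_of_forall_ne_eq ⟨0, hk⟩ fun s hs => ?_
      have hs : 0 < (s : ℕ) := Nat.pos_of_ne_zero fun h => hs (Fin.ext h)
      have := hL s hs
      have := hI s
      have := hJ s
      have := I.2.add_le s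
      have := J.2.add_le s
      omega
    · obtain ⟨p, -, hp⟩ := I.2.exists_eq_band fun s => (hR s).trans (hI s)
      obtain ⟨q, -, hq⟩ := J.2.exists_eq_band fun s => (hR s).trans (hJ s)
      rcases le_total p q with h | h
      · exact Or.inr (Pi.le_def.2 fun s => by rw [hp s, hq s]; split_ifs <;> omega)
      · exact Or.inl (Pi.le_def.2 fun s => by rw [hp s, hq s]; split_ifs <;> omega)

end Chain

section Zkn

variable {n k : ℕ}

lemma w0t_rev (I : Fin k → ℕ) (s : Fin k) : w0t n I s.rev = n + 1 - I s := by
  have hs := s.isLt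
  simp only [w0t, Fin.val_rev]
  congr 2
  ext
  simp only
  omega

lemma zpred_w0t_of_eq_top (v : PlVar n k)
    (hv : ∀ s : Fin k, 0 < (s : ℕ) → v.val s = n - k + 1 + s) : ZPred n k (w0t n v.val) := by
  rcases Nat.eq_zero_or_pos k with rfl | hk
  · exact Or.inl ⟨0, le_rfl, Nat.zero_le n, fun s => s.elim0⟩
  have := v.2.succ_le ⟨0, hk⟩
  have := v.2.add_le ⟨0, hk⟩
  refine Or.inl ⟨n + 1 - v.val ⟨0, hk⟩, by simp only at *; omega, by simp only at *; omega,
    fun s => ?_⟩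
  obtain ⟨t, rfl⟩ := Fin.rev_surjective s
  rw [w0t_rev, Fin.val_rev]
  by_cases ht : (t : ℕ) = 0
  · obtain rfl : t = ⟨0, hk⟩ := Fin.ext ht
    rw [if_neg (by simp only; omega)]
  · have := hv t (Nat.pos_of_ne_zero ht)
    have := t.isLt
    rw [if_pos (by omega)]
    omega

lemma zpred_w0t_iff (v : PlVar n k) :
    ZPred n k (w0t n v.val) ↔
      (∀ s : Fin k, 0 < (s : ℕ) → v.val s = n - k + 1 + s) ∨
        ∀ s : Fin k, n - k + s ≤ v.val s := by
  constructor
  · rintro (⟨i, -, -, h⟩ | ⟨i, -, -, h⟩)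
    · refine Or.inl fun s hs => ?_
      have hrev := h s.rev
      have := s.isLt
      have := v.2.succ_le s
      have := v.2.add_le s
      rw [w0t_rev, Fin.val_rev, if_pos (by omega)] at hrev
      omega
    · refine Or.inr fun s => ?_
      have hrev := h s.rev
      have := v.2.succ_le s
      have := v.2.add_le s
      rw [w0t_rev, Fin.val_rev] at hrev
      split_ifs at hrev <;> omega
  · rintro (hv | hv)
    · exact zpred_w0t_of_eq_top v hv
    obtain ⟨p, hpk, hp⟩ := v.2.exists_eq_band hv
    by_cases hp1 : p ≤ 1
    · exact zpred_w0t_of_eq_top v fun s hs => by rw [hp s, if_pos (by omega)]; omega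
    refine Or.inr ⟨k + 1 - p, by omega, by omega, fun s => ?_⟩
    obtain ⟨t, rfl⟩ := Fin.rev_surjective s
    have := t.isLt
    have := v.2.add_le t
    have := v.2.succ_le t
    rw [w0t_rev, hp t, Fin.val_rev]
    split_ifs <;> omega

end Zkn

theorem statement_10_general (K : Type*) [Field K] (n k : ℕ) (hk : 0 < k)
    (v : PlVar n k) :
    restrictIdeal (RingHom.ker (phiMF K n k 0)) (TgeV v) = ⊥ ↔ ZPred n k (w0t n v.val) := by
  rw [restrictIdeal_ker_phiMF_zero_tgeV, kerPhiRes_zero_eq_bot_iff,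
    linearIndependent_diagExp_tgeV_iff hk, tgeV_total_iff, zpred_w0t_iff]

/-- The restricted ideal `G_{k,n,0}|^v = ker(φ_0)|_{{I : v ≤ I}}` is the
zero ideal if and only if `w_0 v ∈ Z_{k,n}`. -/
theorem statement_10 (K : Type*) [Field K] (n k : ℕ) (hk : 0 < k) (hkn : k < n)
    (v : PlVar n k) :
    restrictIdeal (RingHom.ker (phiMF K n k 0)) (TgeV v) = ⊥ ↔ ZPred n k (w0t n v.val) :=
  statement_10_general K n k hk v
end

section
/- Let k ≤ n be positive integers and 1 ≤ ℓ ≤ n-1. If T_1 and T_2 are two-column semi-standard Young tableaux with entries in [n] such that the B_ℓ-arranged tableaux Γ_ℓ(T_1) and Γ_ℓ(T_2) are row-wise equal, then T_1 = T_2. -/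
open MvPolynomial

section Statement11Aux

lemma pair_eq {a b c d : ℕ} :
    ({a, b} : Multiset ℕ) = {c, d} ↔ (a = c ∧ b = d) ∨ (a = d ∧ b = c) := by
  constructor
  · intro h
    have h' : a ::ₘ {b} = c ::ₘ {d} := h
    rcases Multiset.cons_eq_cons.mp h' with ⟨h1, h2⟩ | ⟨h1, cs, h2, h3⟩
    · exact Or.inl ⟨h1, Multiset.singleton_inj.mp h2⟩
    · have hcs : cs = 0 := by
        have := congrArg Multiset.card h2
        simpa using this
      subst hcs
      simp only [Multiset.cons_zero, Multiset.singleton_inj] at h2 h3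
      exact Or.inr ⟨h3.symm, h2⟩
  · rintro (⟨rfl, rfl⟩ | ⟨rfl, rfl⟩)
    · rfl
    · exact Multiset.pair_comm a b

lemma nSmall_eq_one_iff_s11 {k : ℕ} (hk : 2 ≤ k) (ℓ : ℕ) (C : Fin k → ℕ) (hC : Monotone C) :
    nSmall ℓ C = 1 ↔ C ⟨0, by omega⟩ ≤ ℓ ∧ ℓ < C ⟨1, by omega⟩ := by
  constructor
  · intro h
    by_contra hcon
    rcases not_and_or.mp hcon with h0 | h1
    · push_neg at h0
      have : (Finset.univ.filter fun s : Fin k => C s ≤ ℓ) = ∅ := by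
        apply Finset.filter_eq_empty_iff.mpr
        intro s _
        have : C ⟨0, by omega⟩ ≤ C s := hC (by simp [Fin.le_def])
        omega
      rw [nSmall, this] at h
      simp at h
    · push_neg at h1
      have hsub : ({⟨0, by omega⟩, ⟨1, by omega⟩} : Finset (Fin k)) ⊆
          Finset.univ.filter fun s : Fin k => C s ≤ ℓ := by
        intro s hs
        have hC0 : C ⟨0, by omega⟩ ≤ C ⟨1, by omega⟩ := hC (by simp [Fin.le_def])
        simp only [Finset.mem_insert, Finset.mem_singleton] at hs
        rcases hs with rfl | rfl <;> simp <;> omega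
      have hcard : ({⟨0, by omega⟩, ⟨1, by omega⟩} : Finset (Fin k)).card = 2 := by
        rw [Finset.card_insert_of_notMem (by simp [Fin.ext_iff]), Finset.card_singleton]
      have := Finset.card_le_card hsub
      rw [hcard] at this
      rw [nSmall] at h
      omega
  · rintro ⟨h0, h1⟩
    have : (Finset.univ.filter fun s : Fin k => C s ≤ ℓ) = {⟨0, by omega⟩} := by
      apply Finset.ext
      intro s
      simp only [Finset.mem_filter, Finset.mem_univ, true_and, Finset.mem_singleton]
      constructor
      · intro hs
        by_contra hne
        have h1s : (1 : ℕ) ≤ (s : ℕ) := by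
          rcases Nat.eq_zero_or_pos (s : ℕ) with h | h
          · exact absurd (Fin.ext h) hne
          · omega
        have : C ⟨1, by omega⟩ ≤ C s := hC (by simp [Fin.le_def]; omega)
        omega
      · rintro rfl; exact h0
    rw [nSmall, this]
    simp

lemma rowArrange_eval {k : ℕ} (hk : 2 ≤ k) (ℓ : ℕ) (C : Fin k → ℕ) (hC : Monotone C) :
    rowArrange ℓ C ⟨0, by omega⟩ =
      (if C ⟨0, by omega⟩ ≤ ℓ ∧ ℓ < C ⟨1, by omega⟩ then C ⟨1, by omega⟩ else C ⟨0, by omega⟩) ∧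
    rowArrange ℓ C ⟨1, by omega⟩ =
      (if C ⟨0, by omega⟩ ≤ ℓ ∧ ℓ < C ⟨1, by omega⟩ then C ⟨0, by omega⟩ else C ⟨1, by omega⟩) ∧
    ∀ s : Fin k, 2 ≤ (s : ℕ) → rowArrange ℓ C s = C s := by
  rw [rowArrange, dif_pos hk]
  by_cases h1 : nSmall ℓ C = 1
  · rw [if_pos h1, if_pos ((nSmall_eq_one_iff_s11 hk ℓ C hC).mp h1),
      if_pos ((nSmall_eq_one_iff_s11 hk ℓ C hC).mp h1)]
    refine ⟨rfl, rfl, fun s hs => ?_⟩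
    simp only [if_neg (show ¬(s : ℕ) = 0 by omega), if_neg (show ¬(s : ℕ) = 1 by omega)]
  · rw [if_neg h1, if_neg (fun hc => h1 ((nSmall_eq_one_iff_s11 hk ℓ C hC).mpr hc)),
      if_neg (fun hc => h1 ((nSmall_eq_one_iff_s11 hk ℓ C hC).mpr hc))]
    exact ⟨rfl, rfl, fun s _ => rfl⟩

/-- The first two entries of the two columns of the `B_ℓ`-arranged `Γ_ℓ` tableau,
as a function of the first two entries of each column. -/
def rowsFun (ℓ a b c d : ℕ) : (ℕ × ℕ) × (ℕ × ℕ) :=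
  if (a ≤ ℓ ∧ b ≤ ℓ ∧ c ≤ ℓ ∧ ℓ < d ∧ a < c ∧ c < b) ∨
     (a ≤ ℓ ∧ ℓ < b ∧ ℓ < c ∧ ℓ < d ∧ c < b ∧ b < d) then
    ((if c ≤ ℓ ∧ ℓ < b then (b, c) else (c, b)),
     (if a ≤ ℓ ∧ ℓ < d then (d, a) else (a, d)))
  else
    ((if a ≤ ℓ ∧ ℓ < b then (b, a) else (a, b)),
     (if c ≤ ℓ ∧ ℓ < d then (d, c) else (c, d)))

lemma rowsFun_inj (ℓ a b c d a' b' c' d' : ℕ)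
    (h1 : a < b) (h2 : c < d) (h3 : a ≤ c) (h4 : b ≤ d)
    (h1' : a' < b') (h2' : c' < d') (h3' : a' ≤ c') (h4' : b' ≤ d')
    (e0 : ({(rowsFun ℓ a b c d).1.1, (rowsFun ℓ a b c d).2.1} : Multiset ℕ)
        = {(rowsFun ℓ a' b' c' d').1.1, (rowsFun ℓ a' b' c' d').2.1})
    (e1 : ({(rowsFun ℓ a b c d).1.2, (rowsFun ℓ a b c d).2.2} : Multiset ℕ)
        = {(rowsFun ℓ a' b' c' d').1.2, (rowsFun ℓ a' b' c' d').2.2}) :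
    a = a' ∧ b = b' ∧ c = c' ∧ d = d' := by
  simp only [rowsFun] at e0 e1
  split_ifs at e0 e1 <;>
    simp only [Prod.fst, Prod.snd] at e0 e1 <;>
    rw [pair_eq] at e0 e1 <;> omega

lemma gamma_key {k : ℕ} (hk : 2 ≤ k) (ℓ : ℕ) (I J : Fin k → ℕ)
    (hI : StrictMono I) (hJ : StrictMono J) (hIJ : ∀ s, I s ≤ J s) :
    rowArrange ℓ (Gamma ℓ I J).1 ⟨0, by omega⟩
        = (rowsFun ℓ (I ⟨0, by omega⟩) (I ⟨1, by omega⟩) (J ⟨0, by omega⟩) (J ⟨1, by omega⟩)).1.1 ∧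
    rowArrange ℓ (Gamma ℓ I J).2 ⟨0, by omega⟩
        = (rowsFun ℓ (I ⟨0, by omega⟩) (I ⟨1, by omega⟩) (J ⟨0, by omega⟩) (J ⟨1, by omega⟩)).2.1 ∧
    rowArrange ℓ (Gamma ℓ I J).1 ⟨1, by omega⟩
        = (rowsFun ℓ (I ⟨0, by omega⟩) (I ⟨1, by omega⟩) (J ⟨0, by omega⟩) (J ⟨1, by omega⟩)).1.2 ∧
    rowArrange ℓ (Gamma ℓ I J).2 ⟨1, by omega⟩
        = (rowsFun ℓ (I ⟨0, by omega⟩) (I ⟨1, by omega⟩) (J ⟨0, by omega⟩) (J ⟨1, by omega⟩)).2.2 ∧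
    ∀ s : Fin k, 2 ≤ (s : ℕ) →
      rowArrange ℓ (Gamma ℓ I J).1 s = I s ∧ rowArrange ℓ (Gamma ℓ I J).2 s = J s := by
  set a := I ⟨0, by omega⟩ with ha
  set b := I ⟨1, by omega⟩ with hb
  set c := J ⟨0, by omega⟩ with hc
  set d := J ⟨1, by omega⟩ with hd
  have hab : a < b := hI (by simp [Fin.lt_def])
  have hcd : c < d := hJ (by simp [Fin.lt_def])
  have hac : a ≤ c := hIJ _
  have hbd : b ≤ d := hIJ _
  have hImono : Monotone I := hI.monotone
  have hJmono : Monotone J := hJ.monotone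
  rw [Gamma, dif_pos hk]
  by_cases hP : (a ≤ ℓ ∧ b ≤ ℓ ∧ c ≤ ℓ ∧ ℓ < d ∧ a < c ∧ c < b) ∨
      (a ≤ ℓ ∧ ℓ < b ∧ ℓ < c ∧ ℓ < d ∧ c < b ∧ b < d)
  · rw [if_pos hP]
    have hcb : c < b := by rcases hP with h | h <;> omega
    have hC1 : Monotone (fun s : Fin k => if (s : ℕ) = 0 then c else I s) := by
      intro s t hst
      simp only []
      split_ifs with hs ht ht
      · rfl
      · have : I ⟨1, by omega⟩ ≤ I t := hImono (by simp [Fin.le_def]; omega)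
        omega
      · omega
      · exact hImono hst
    have hC2 : Monotone (fun s : Fin k => if (s : ℕ) = 0 then a else J s) := by
      intro s t hst
      simp only []
      split_ifs with hs ht ht
      · rfl
      · have : J ⟨1, by omega⟩ ≤ J t := hJmono (by simp [Fin.le_def]; omega)
        omega
      · omega
      · exact hJmono hst
    obtain ⟨e10, e11, e1r⟩ := rowArrange_eval hk ℓ _ hC1
    obtain ⟨e20, e21, e2r⟩ := rowArrange_eval hk ℓ _ hC2
    simp only [Fin.isValue] at e10 e11 e20 e21
    norm_num at e10 e11 e20 e21
    rw [rowsFun, if_pos hP]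
    refine ⟨?_, ?_, ?_, ?_, fun s hs => ?_⟩
    · rw [e10]; split_ifs <;> rfl
    · rw [e20]; split_ifs <;> rfl
    · rw [e11]; split_ifs <;> rfl
    · rw [e21]; split_ifs <;> rfl
    · constructor
      · rw [e1r s hs]
        simp only [if_neg (show ¬(s : ℕ) = 0 by omega)]
      · rw [e2r s hs]
        simp only [if_neg (show ¬(s : ℕ) = 0 by omega)]
  · rw [if_neg hP]
    obtain ⟨e10, e11, e1r⟩ := rowArrange_eval hk ℓ I hImono
    obtain ⟨e20, e21, e2r⟩ := rowArrange_eval hk ℓ J hJmono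
    rw [rowsFun, if_neg hP]
    refine ⟨?_, ?_, ?_, ?_, fun s hs => ⟨e1r s hs, e2r s hs⟩⟩
    · rw [e10]; split_ifs <;> rfl
    · rw [e20]; split_ifs <;> rfl
    · rw [e11]; split_ifs <;> rfl
    · rw [e21]; split_ifs <;> rfl

end Statement11Aux

/-- If `T_1` and `T_2` are two-column semi-standard Young tableaux such
that the `B_ℓ`-arranged tableaux `Γ_ℓ(T_1)` and `Γ_ℓ(T_2)` are row-wise equal, then
`T_1 = T_2`. -/
theorem statement_11 (n k ℓ : ℕ) (hk : 0 < k) (hkn : k ≤ n)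
    (hℓ1 : 1 ≤ ℓ) (hℓ2 : ℓ ≤ n - 1)
    (I₁ J₁ I₂ J₂ : Fin k → ℕ) (h₁ : SSYT n k I₁ J₁) (h₂ : SSYT n k I₂ J₂)
    (h : rowEq (rowArrange ℓ (Gamma ℓ I₁ J₁).1) (rowArrange ℓ (Gamma ℓ I₁ J₁).2)
               (rowArrange ℓ (Gamma ℓ I₂ J₂).1) (rowArrange ℓ (Gamma ℓ I₂ J₂).2)) :
    I₁ = I₂ ∧ J₁ = J₂ := by
  obtain ⟨⟨hI₁, _⟩, ⟨hJ₁, _⟩, hIJ₁⟩ := h₁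
  obtain ⟨⟨hI₂, _⟩, ⟨hJ₂, _⟩, hIJ₂⟩ := h₂
  by_cases hk2 : 2 ≤ k
  · obtain ⟨g10, g20, g11, g21, gr⟩ := gamma_key hk2 ℓ I₁ J₁ hI₁ hJ₁ hIJ₁
    obtain ⟨g10', g20', g11', g21', gr'⟩ := gamma_key hk2 ℓ I₂ J₂ hI₂ hJ₂ hIJ₂
    have e0 := h ⟨0, by omega⟩
    have e1 := h ⟨1, by omega⟩
    rw [g10, g20, g10', g20'] at e0
    rw [g11, g21, g11', g21'] at e1
    have hmain := rowsFun_inj ℓ _ _ _ _ _ _ _ _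
      (hI₁ (by simp [Fin.lt_def])) (hJ₁ (by simp [Fin.lt_def])) (hIJ₁ _) (hIJ₁ _)
      (hI₂ (by simp [Fin.lt_def])) (hJ₂ (by simp [Fin.lt_def])) (hIJ₂ _) (hIJ₂ _)
      e0 e1
    have hrest : ∀ s : Fin k, 2 ≤ (s : ℕ) → I₁ s = I₂ s ∧ J₁ s = J₂ s := by
      intro s hs
      have hrow := h s
      rw [(gr s hs).1, (gr s hs).2, (gr' s hs).1, (gr' s hs).2, pair_eq] at hrow
      have := hIJ₁ s
      have := hIJ₂ s
      omega
    constructor <;> funext s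
    · rcases Nat.lt_or_ge (s : ℕ) 2 with hs | hs
      · interval_cases hsv : (s : ℕ)
        · have hseq : s = ⟨0, by omega⟩ := Fin.ext hsv
          rw [hseq]; exact hmain.1
        · have hseq : s = ⟨1, by omega⟩ := Fin.ext hsv
          rw [hseq]; exact hmain.2.1
      · exact (hrest s hs).1
    · rcases Nat.lt_or_ge (s : ℕ) 2 with hs | hs
      · interval_cases hsv : (s : ℕ)
        · have hseq : s = ⟨0, by omega⟩ := Fin.ext hsv
          rw [hseq]; exact hmain.2.2.1
        · have hseq : s = ⟨1, by omega⟩ := Fin.ext hsv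
          rw [hseq]; exact hmain.2.2.2
      · exact (hrest s hs).2
  · have hall : ∀ s : Fin k, I₁ s = I₂ s ∧ J₁ s = J₂ s := by
      intro s
      have hrow := h s
      simp only [Gamma, dif_neg hk2, rowArrange] at hrow
      rw [pair_eq] at hrow
      have := hIJ₁ s
      have := hIJ₂ s
      omega
    exact ⟨funext fun s => (hall s).1, funext fun s => (hall s).2⟩
end

section
/- Let k ≤ n be positive integers and 1 ≤ ℓ ≤ n-1. Let T be any two-column tableau whose columns are k-subsets of [n] arranged in B_ℓ-order. Then there exists a two-column semi-standard Young tableau T' with entries in [n] such that Γ_ℓ(T') and T are row-wise equal. -/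
open MvPolynomial

/-! ### Auxiliary machinery for Statement 12 -/

namespace Stmt12

/-- A column whose first two entries are `a`, `b` and whose remaining entries
are given by `R`. -/
def col2 {k : ℕ} (a b : ℕ) (R : Fin k → ℕ) : Fin k → ℕ :=
  fun s => if (s : ℕ) = 0 then a else if (s : ℕ) = 1 then b else R s

lemma col2_e0 {k : ℕ} {a b : ℕ} {R : Fin k → ℕ} {s : Fin k} (h : (s : ℕ) = 0) :
    col2 a b R s = a := by simp [col2, h]

lemma col2_e1 {k : ℕ} {a b : ℕ} {R : Fin k → ℕ} {s : Fin k} (h : (s : ℕ) = 1) :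
    col2 a b R s = b := by simp [col2, h]

lemma col2_e2 {k : ℕ} {a b : ℕ} {R : Fin k → ℕ} {s : Fin k} (h : 2 ≤ (s : ℕ)) :
    col2 a b R s = R s := by
  simp only [col2]
  rw [if_neg (by omega), if_neg (by omega)]

lemma col2_self {k : ℕ} (hk : 2 ≤ k) (X : Fin k → ℕ) :
    col2 (X ⟨0, by omega⟩) (X ⟨1, by omega⟩) X = X := by
  funext s
  by_cases h0 : (s : ℕ) = 0
  · rw [col2_e0 h0]; congr 1; exact Fin.ext h0.symm
  · by_cases h1 : (s : ℕ) = 1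
    · rw [col2_e1 h1]; congr 1; exact Fin.ext h1.symm
    · rw [col2_e2 (by omega)]

lemma ns_one {k ℓ : ℕ} (hk : 2 ≤ k) {a b : ℕ} {R : Fin k → ℕ}
    (ha : a ≤ ℓ) (hb : ℓ < b) (hR : ∀ s : Fin k, 2 ≤ (s : ℕ) → ℓ < R s) :
    nSmall ℓ (col2 a b R) = 1 := by
  have : (Finset.univ.filter fun s : Fin k => col2 a b R s ≤ ℓ) = {⟨0, by omega⟩} := by
    ext s
    simp only [Finset.mem_filter, Finset.mem_univ, true_and, Finset.mem_singleton]
    constructor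
    · intro hs
      by_cases h0 : (s : ℕ) = 0
      · exact Fin.ext h0
      · by_cases h1 : (s : ℕ) = 1
        · rw [col2_e1 h1] at hs; omega
        · rw [col2_e2 (by omega)] at hs
          exact absurd hs (by have := hR s (by omega); omega)
    · intro hs; subst hs; rw [col2_e0 rfl]; exact ha
  rw [nSmall, this, Finset.card_singleton]

lemma ns_ne_one_two {k ℓ : ℕ} (hk : 2 ≤ k) {a b : ℕ} {R : Fin k → ℕ}
    (ha : a ≤ ℓ) (hb : b ≤ ℓ) : nSmall ℓ (col2 a b R) ≠ 1 := by
  have hsub : ({⟨0, by omega⟩, ⟨1, by omega⟩} : Finset (Fin k)) ⊆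
      Finset.univ.filter fun s : Fin k => col2 a b R s ≤ ℓ := by
    intro s hs
    simp only [Finset.mem_insert, Finset.mem_singleton] at hs
    simp only [Finset.mem_filter, Finset.mem_univ, true_and]
    rcases hs with hs | hs <;> subst hs
    · rw [col2_e0 rfl]; exact ha
    · rw [col2_e1 rfl]; exact hb
  have hcard : 2 ≤ nSmall ℓ (col2 a b R) := by
    have h2 : ({⟨0, by omega⟩, ⟨1, by omega⟩} : Finset (Fin k)).card = 2 := by
      rw [Finset.card_insert_of_notMem (by simp [Fin.ext_iff]), Finset.card_singleton]
    rw [nSmall, ← h2]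
    exact Finset.card_le_card hsub
  omega

lemma ns_ne_one_zero {k ℓ : ℕ} {a b : ℕ} {R : Fin k → ℕ}
    (ha : ℓ < a) (hb : ℓ < b) (hR : ∀ s : Fin k, 2 ≤ (s : ℕ) → ℓ < R s) :
    nSmall ℓ (col2 a b R) ≠ 1 := by
  have : (Finset.univ.filter fun s : Fin k => col2 a b R s ≤ ℓ) = ∅ := by
    rw [Finset.filter_eq_empty_iff]
    intro s _
    by_cases h0 : (s : ℕ) = 0
    · rw [col2_e0 h0]; omega
    · by_cases h1 : (s : ℕ) = 1
      · rw [col2_e1 h1]; omega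
      · rw [col2_e2 (by omega)]
        have := hR s (by omega); omega
  rw [nSmall, this]; simp

lemma arr_id {k ℓ : ℕ} {X : Fin k → ℕ} (h : nSmall ℓ X ≠ 1) :
    rowArrange ℓ X = X := by
  unfold rowArrange
  by_cases hk : 2 ≤ k
  · rw [dif_pos hk, if_neg h]
  · rw [dif_neg hk]

lemma arr_swap {k ℓ : ℕ} (hk : 2 ≤ k) {a b : ℕ} {R : Fin k → ℕ}
    (h : nSmall ℓ (col2 a b R) = 1) :
    rowArrange ℓ (col2 a b R) = col2 b a R := by
  unfold rowArrange
  rw [dif_pos hk, if_pos h]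
  funext s
  by_cases h0 : (s : ℕ) = 0
  · rw [if_pos h0, col2_e0 h0, col2_e1 rfl]
  · by_cases h1 : (s : ℕ) = 1
    · rw [if_neg h0, if_pos h1, col2_e1 h1, col2_e0 rfl]
    · rw [if_neg h0, if_neg h1, col2_e2 (by omega), col2_e2 (by omega)]

lemma gamma_id {k ℓ : ℕ} (hk : 2 ≤ k) (a b c d : ℕ) (R R' : Fin k → ℕ)
    (h : ¬ ((a ≤ ℓ ∧ b ≤ ℓ ∧ c ≤ ℓ ∧ ℓ < d ∧ a < c ∧ c < b) ∨
            (a ≤ ℓ ∧ ℓ < b ∧ ℓ < c ∧ ℓ < d ∧ c < b ∧ b < d))) :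
    Gamma ℓ (col2 a b R) (col2 c d R') = (col2 a b R, col2 c d R') := by
  unfold Gamma
  rw [dif_pos hk]
  exact if_neg h

lemma gamma_swap {k ℓ : ℕ} (hk : 2 ≤ k) (a b c d : ℕ) (R R' : Fin k → ℕ)
    (h : (a ≤ ℓ ∧ b ≤ ℓ ∧ c ≤ ℓ ∧ ℓ < d ∧ a < c ∧ c < b) ∨
         (a ≤ ℓ ∧ ℓ < b ∧ ℓ < c ∧ ℓ < d ∧ c < b ∧ b < d)) :
    Gamma ℓ (col2 a b R) (col2 c d R') = (col2 c b R, col2 a d R') := by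
  have P1 : (fun s : Fin k => if (s : ℕ) = 0 then c else col2 a b R s) = col2 c b R := by
    funext s
    by_cases h0 : (s : ℕ) = 0
    · rw [if_pos h0, col2_e0 h0]
    · rw [if_neg h0]
      by_cases h1 : (s : ℕ) = 1
      · rw [col2_e1 h1, col2_e1 h1]
      · rw [col2_e2 (by omega), col2_e2 (by omega)]
  have P2 : (fun s : Fin k => if (s : ℕ) = 0 then a else col2 c d R' s) = col2 a d R' := by
    funext s
    by_cases h0 : (s : ℕ) = 0
    · rw [if_pos h0, col2_e0 h0]
    · rw [if_neg h0]
      by_cases h1 : (s : ℕ) = 1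
      · rw [col2_e1 h1, col2_e1 h1]
      · rw [col2_e2 (by omega), col2_e2 (by omega)]
  have key : Gamma ℓ (col2 a b R) (col2 c d R') =
      ((fun s : Fin k => if (s : ℕ) = 0 then c else col2 a b R s),
       (fun s : Fin k => if (s : ℕ) = 0 then a else col2 c d R' s)) := by
    unfold Gamma
    rw [dif_pos hk]
    exact if_pos h
  rw [key, P1, P2]

lemma minmax_pair (x y : ℕ) : ({min x y, max x y} : Multiset ℕ) = {x, y} := by
  rcases le_total x y with h | h
  · rw [min_eq_left h, max_eq_right h]
  · rw [min_eq_right h, max_eq_left h]; exact Multiset.pair_comm _ _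

lemma rowEq_col2 {k : ℕ} {a b a' b' x y x' y' : ℕ} {R R' T T' : Fin k → ℕ}
    (h0 : ({a, a'} : Multiset ℕ) = {x, x'}) (h1 : ({b, b'} : Multiset ℕ) = {y, y'})
    (h2 : ∀ s : Fin k, 2 ≤ (s : ℕ) → ({R s, R' s} : Multiset ℕ) = {T s, T' s}) :
    rowEq (col2 a b R) (col2 a' b' R') (col2 x y T) (col2 x' y' T') := by
  intro s
  by_cases hs0 : (s : ℕ) = 0
  · rw [col2_e0 hs0, col2_e0 hs0, col2_e0 hs0, col2_e0 hs0]; exact h0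
  · by_cases hs1 : (s : ℕ) = 1
    · rw [col2_e1 hs1, col2_e1 hs1, col2_e1 hs1, col2_e1 hs1]; exact h1
    · rw [col2_e2 (by omega), col2_e2 (by omega), col2_e2 (by omega), col2_e2 (by omega)]
      exact h2 s (by omega)

/-- Build an SSYT whose columns agree with row-wise min/max of `C`, `D` from row 3 on. -/
lemma build {n k : ℕ} (hk : 2 ≤ k) (C D : Fin k → ℕ)
    (hC : IsIdx n k C) (hD : IsIdx n k D) (e0 e1 f0 f1 : ℕ)
    (hb : 1 ≤ e0 ∧ e1 ≤ n ∧ 1 ≤ f0 ∧ f1 ≤ n)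
    (h01 : e0 < e1) (hf01 : f0 < f1) (hef0 : e0 ≤ f0) (hef1 : e1 ≤ f1)
    (he2 : ∀ s : Fin k, 2 ≤ (s : ℕ) → e1 < min (C s) (D s))
    (hf2 : ∀ s : Fin k, 2 ≤ (s : ℕ) → f1 < max (C s) (D s)) :
    SSYT n k (col2 e0 e1 (fun s => min (C s) (D s)))
             (col2 f0 f1 (fun s => max (C s) (D s))) := by
  have hCb := hC.2
  have hDb := hD.2
  have hsmC : ∀ s t : Fin k, s < t → C s < C t := fun s t h => hC.1 h
  have hsmD : ∀ s t : Fin k, s < t → D s < D t := fun s t h => hD.1 h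
  have key : ∀ (g0 g1 : ℕ) (mx : Fin k → ℕ), g0 < g1 →
      (∀ s : Fin k, 2 ≤ (s : ℕ) → g1 < mx s) →
      (∀ s t : Fin k, 2 ≤ (s : ℕ) → s < t → mx s < mx t) →
      StrictMono (col2 g0 g1 mx) := by
    intro g0 g1 mx hg hgm hmono s t hst
    have hst' : (s : ℕ) < (t : ℕ) := hst
    by_cases hs0 : (s : ℕ) = 0
    · rw [col2_e0 hs0]
      by_cases ht1 : (t : ℕ) = 1
      · rw [col2_e1 ht1]; exact hg
      · rw [col2_e2 (by omega)]
        exact hg.trans (hgm t (by omega))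
    · by_cases hs1 : (s : ℕ) = 1
      · rw [col2_e1 hs1, col2_e2 (by omega)]
        exact hgm t (by omega)
      · rw [col2_e2 (by omega), col2_e2 (by omega)]
        exact hmono s t (by omega) hst
  have hminmono : ∀ s t : Fin k, 2 ≤ (s : ℕ) → s < t →
      min (C s) (D s) < min (C t) (D t) := by
    intro s t _ hst
    have h1 := hsmC s t hst
    have h2 := hsmD s t hst
    omega
  have hmaxmono : ∀ s t : Fin k, 2 ≤ (s : ℕ) → s < t →
      max (C s) (D s) < max (C t) (D t) := by
    intro s t _ hst
    have h1 := hsmC s t hst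
    have h2 := hsmD s t hst
    omega
  obtain ⟨hb1, hb2, hb3, hb4⟩ := hb
  refine ⟨⟨key e0 e1 _ h01 he2 hminmono, ?_⟩, ⟨key f0 f1 _ hf01 hf2 hmaxmono, ?_⟩, ?_⟩
  · intro s
    by_cases hs0 : (s : ℕ) = 0
    · rw [col2_e0 hs0]; omega
    · by_cases hs1 : (s : ℕ) = 1
      · rw [col2_e1 hs1]; omega
      · rw [col2_e2 (by omega)]
        have h1 := hCb s; have h2 := hDb s; omega
  · intro s
    by_cases hs0 : (s : ℕ) = 0
    · rw [col2_e0 hs0]; omega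
    · by_cases hs1 : (s : ℕ) = 1
      · rw [col2_e1 hs1]; omega
      · rw [col2_e2 (by omega)]
        have h1 := hCb s; have h2 := hDb s; omega
  · intro s
    by_cases hs0 : (s : ℕ) = 0
    · rw [col2_e0 hs0, col2_e0 hs0]; exact hef0
    · by_cases hs1 : (s : ℕ) = 1
      · rw [col2_e1 hs1, col2_e1 hs1]; exact hef1
      · rw [col2_e2 (by omega), col2_e2 (by omega)]; omega

lemma gid1 {k ℓ : ℕ} (hk : 2 ≤ k) (a b c d : ℕ) (R R' : Fin k → ℕ)
    (h : ¬ ((a ≤ ℓ ∧ b ≤ ℓ ∧ c ≤ ℓ ∧ ℓ < d ∧ a < c ∧ c < b) ∨ (a ≤ ℓ ∧ ℓ < b ∧ ℓ < c ∧ ℓ < d ∧ c < b ∧ b < d))) :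
    (Gamma ℓ (col2 a b R) (col2 c d R')).1 = col2 a b R := by
  rw [gamma_id hk a b c d R R' h]

lemma gid2 {k ℓ : ℕ} (hk : 2 ≤ k) (a b c d : ℕ) (R R' : Fin k → ℕ)
    (h : ¬ ((a ≤ ℓ ∧ b ≤ ℓ ∧ c ≤ ℓ ∧ ℓ < d ∧ a < c ∧ c < b) ∨ (a ≤ ℓ ∧ ℓ < b ∧ ℓ < c ∧ ℓ < d ∧ c < b ∧ b < d))) :
    (Gamma ℓ (col2 a b R) (col2 c d R')).2 = col2 c d R' := by
  rw [gamma_id hk a b c d R R' h]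

lemma gsw1 {k ℓ : ℕ} (hk : 2 ≤ k) (a b c d : ℕ) (R R' : Fin k → ℕ)
    (h : ((a ≤ ℓ ∧ b ≤ ℓ ∧ c ≤ ℓ ∧ ℓ < d ∧ a < c ∧ c < b) ∨ (a ≤ ℓ ∧ ℓ < b ∧ ℓ < c ∧ ℓ < d ∧ c < b ∧ b < d))) :
    (Gamma ℓ (col2 a b R) (col2 c d R')).1 = col2 c b R := by
  rw [gamma_swap hk a b c d R R' h]

lemma gsw2 {k ℓ : ℕ} (hk : 2 ≤ k) (a b c d : ℕ) (R R' : Fin k → ℕ)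
    (h : ((a ≤ ℓ ∧ b ≤ ℓ ∧ c ≤ ℓ ∧ ℓ < d ∧ a < c ∧ c < b) ∨ (a ≤ ℓ ∧ ℓ < b ∧ ℓ < c ∧ ℓ < d ∧ c < b ∧ b < d))) :
    (Gamma ℓ (col2 a b R) (col2 c d R')).2 = col2 a d R' := by
  rw [gamma_swap hk a b c d R R' h]

lemma arr_swap' {k ℓ : ℕ} (hk : 2 ≤ k) (a b : ℕ) (R : Fin k → ℕ)
    (ha : a ≤ ℓ) (hb : ℓ < b) (hR : ∀ s : Fin k, 2 ≤ (s : ℕ) → ℓ < R s) :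
    rowArrange ℓ (col2 a b R) = col2 b a R := arr_swap hk (ns_one hk ha hb hR)

lemma arr_id2 {k ℓ : ℕ} (hk : 2 ≤ k) (a b : ℕ) (R : Fin k → ℕ)
    (ha : a ≤ ℓ) (hb : b ≤ ℓ) :
    rowArrange ℓ (col2 a b R) = col2 a b R := arr_id (ns_ne_one_two hk ha hb)

lemma arr_id0 {k ℓ : ℕ} (a b : ℕ) (R : Fin k → ℕ)
    (ha : ℓ < a) (hb : ℓ < b) (hR : ∀ s : Fin k, 2 ≤ (s : ℕ) → ℓ < R s) :
    rowArrange ℓ (col2 a b R) = col2 a b R := arr_id (ns_ne_one_zero ha hb hR)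

lemma arrT_swap {k ℓ : ℕ} (hk : 2 ≤ k) (C : Fin k → ℕ) (hCm : StrictMono C)
    (h0k : 0 < k) (h1k : 1 < k)
    (h0 : C ⟨0, h0k⟩ ≤ ℓ) (h1 : ℓ < C ⟨1, h1k⟩) :
    rowArrange ℓ C = col2 (C ⟨1, h1k⟩) (C ⟨0, h0k⟩) C := by
  conv_lhs => rw [← col2_self hk C]
  have e0 : (⟨0, by omega⟩ : Fin k) = ⟨0, h0k⟩ := rfl
  have e1 : (⟨1, by omega⟩ : Fin k) = ⟨1, h1k⟩ := rfl
  rw [e0, e1]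
  exact arr_swap' hk _ _ _ h0 h1
    (fun s hs => h1.trans (hCm (by simp only [Fin.lt_def]; omega)))

lemma arrT_id {k ℓ : ℕ} (hk : 2 ≤ k) (C : Fin k → ℕ) (hCm : StrictMono C)
    (h0k : 0 < k) (h1k : 1 < k)
    (h : ¬ (C ⟨0, h0k⟩ ≤ ℓ ∧ ℓ < C ⟨1, h1k⟩)) :
    rowArrange ℓ C = col2 (C ⟨0, h0k⟩) (C ⟨1, h1k⟩) C := by
  conv_lhs => rw [← col2_self hk C]
  have e0 : (⟨0, by omega⟩ : Fin k) = ⟨0, h0k⟩ := rfl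
  have e1 : (⟨1, by omega⟩ : Fin k) = ⟨1, h1k⟩ := rfl
  rw [e0, e1]
  rcases le_or_gt (C ⟨1, h1k⟩) ℓ with h1 | h1
  · exact arr_id2 hk _ _ _
      ((hCm (show (⟨0, h0k⟩ : Fin k) < ⟨1, h1k⟩ by simp [Fin.lt_def])).le.trans h1) h1
  · have h0 : ℓ < C ⟨0, h0k⟩ := Nat.lt_of_not_le (fun hle => h ⟨hle, h1⟩)
    exact arr_id0 _ _ _ h0 h1
      (fun s hs => h1.trans (hCm (by simp only [Fin.lt_def]; omega)))

lemma key {n k ℓ : ℕ} (hk : 2 ≤ k) (C D : Fin k → ℕ)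
    (hC : IsIdx n k C) (hD : IsIdx n k D)
    (hcase : (C ⟨1, by omega⟩ ≤ ℓ) ∨
      (C ⟨0, by omega⟩ ≤ ℓ ∧ ℓ < C ⟨1, by omega⟩ ∧ ℓ < D ⟨1, by omega⟩) ∨
      (ℓ < C ⟨0, by omega⟩ ∧ ℓ < D ⟨0, by omega⟩)) :
    ∃ I J : Fin k → ℕ, SSYT n k I J ∧
      rowEq (rowArrange ℓ (Gamma ℓ I J).1) (rowArrange ℓ (Gamma ℓ I J).2)
            (rowArrange ℓ C) (rowArrange ℓ D) := by
  have h0k : 0 < k := by omega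
  have h1k : 1 < k := by omega
  replace hcase : ((C ⟨1, h1k⟩) ≤ ℓ) ∨ ((C ⟨0, h0k⟩) ≤ ℓ ∧ ℓ < (C ⟨1, h1k⟩) ∧ ℓ < (D ⟨1, h1k⟩)) ∨ (ℓ < (C ⟨0, h0k⟩) ∧ ℓ < (D ⟨0, h0k⟩)) := hcase
  have hc01 : (C ⟨0, h0k⟩) < (C ⟨1, h1k⟩) := hC.1 (by simp [Fin.lt_def])
  have hd01 : (D ⟨0, h0k⟩) < (D ⟨1, h1k⟩) := hD.1 (by simp [Fin.lt_def])
  have hc2 : ∀ s : Fin k, 2 ≤ (s : ℕ) → (C ⟨1, h1k⟩) < C s :=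
    fun s hs => hC.1 (by simp only [Fin.lt_def]; omega)
  have hd2 : ∀ s : Fin k, 2 ≤ (s : ℕ) → (D ⟨1, h1k⟩) < D s :=
    fun s hs => hD.1 (by simp only [Fin.lt_def]; omega)
  have hcb0 : 1 ≤ (C ⟨0, h0k⟩) ∧ (C ⟨0, h0k⟩) ≤ n := hC.2 _
  have hcb1 : 1 ≤ (C ⟨1, h1k⟩) ∧ (C ⟨1, h1k⟩) ≤ n := hC.2 _
  have hdb0 : 1 ≤ (D ⟨0, h0k⟩) ∧ (D ⟨0, h0k⟩) ≤ n := hD.2 _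
  have hdb1 : 1 ≤ (D ⟨1, h1k⟩) ∧ (D ⟨1, h1k⟩) ≤ n := hD.2 _
  rcases hcase with hA | hB | hLL
  · -- first column is (S, S)
    rcases le_or_gt (D ⟨1, h1k⟩) ℓ with hd1 | hd1
    · -- A1 : second column (S, S)
      refine ⟨col2 (min (C ⟨0, h0k⟩) (D ⟨0, h0k⟩)) (min (C ⟨1, h1k⟩) (D ⟨1, h1k⟩)) (fun s => min (C s) (D s)), col2 (max (C ⟨0, h0k⟩) (D ⟨0, h0k⟩)) (max (C ⟨1, h1k⟩) (D ⟨1, h1k⟩)) (fun s => max (C s) (D s)),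
        build hk C D hC hD (min (C ⟨0, h0k⟩) (D ⟨0, h0k⟩)) (min (C ⟨1, h1k⟩) (D ⟨1, h1k⟩)) (max (C ⟨0, h0k⟩) (D ⟨0, h0k⟩)) (max (C ⟨1, h1k⟩) (D ⟨1, h1k⟩)) ⟨by omega, by omega, by omega, by omega⟩ (by omega) (by omega) (by omega) (by omega) (fun s hs => by have e1 := hc2 s hs; have e2 := hd2 s hs; omega) (fun s hs => by have e1 := hc2 s hs; have e2 := hd2 s hs; omega), ?_⟩
      rw [gid1 hk (min (C ⟨0, h0k⟩) (D ⟨0, h0k⟩)) (min (C ⟨1, h1k⟩) (D ⟨1, h1k⟩)) (max (C ⟨0, h0k⟩) (D ⟨0, h0k⟩)) (max (C ⟨1, h1k⟩) (D ⟨1, h1k⟩)) (fun s => min (C s) (D s)) (fun s => max (C s) (D s)) (by omega),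
          gid2 hk (min (C ⟨0, h0k⟩) (D ⟨0, h0k⟩)) (min (C ⟨1, h1k⟩) (D ⟨1, h1k⟩)) (max (C ⟨0, h0k⟩) (D ⟨0, h0k⟩)) (max (C ⟨1, h1k⟩) (D ⟨1, h1k⟩)) (fun s => min (C s) (D s)) (fun s => max (C s) (D s)) (by omega),
          arr_id2 hk (min (C ⟨0, h0k⟩) (D ⟨0, h0k⟩)) (min (C ⟨1, h1k⟩) (D ⟨1, h1k⟩)) (fun s => min (C s) (D s)) (by omega) (by omega),
          arr_id2 hk (max (C ⟨0, h0k⟩) (D ⟨0, h0k⟩)) (max (C ⟨1, h1k⟩) (D ⟨1, h1k⟩)) (fun s => max (C s) (D s)) (by omega) (by omega),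
          arrT_id hk C hC.1 h0k h1k (by omega), arrT_id hk D hD.1 h0k h1k (by omega)]
      exact rowEq_col2 (minmax_pair _ _) (minmax_pair _ _) (fun s hs => minmax_pair _ _)
    · rcases le_or_gt (D ⟨0, h0k⟩) ℓ with hd0 | hd0
      · -- A3 : second column (S, L)
        by_cases h3 : (C ⟨0, h0k⟩) < (D ⟨0, h0k⟩) ∧ (D ⟨0, h0k⟩) < (C ⟨1, h1k⟩)
        · -- A3b
          refine ⟨col2 (C ⟨0, h0k⟩) (D ⟨0, h0k⟩) (fun s => min (C s) (D s)), col2 (C ⟨1, h1k⟩) (D ⟨1, h1k⟩) (fun s => max (C s) (D s)),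
            build hk C D hC hD (C ⟨0, h0k⟩) (D ⟨0, h0k⟩) (C ⟨1, h1k⟩) (D ⟨1, h1k⟩) ⟨by omega, by omega, by omega, by omega⟩ (by omega) (by omega) (by omega) (by omega) (fun s hs => by have e1 := hc2 s hs; have e2 := hd2 s hs; omega) (fun s hs => by have e1 := hc2 s hs; have e2 := hd2 s hs; omega), ?_⟩
          rw [gid1 hk (C ⟨0, h0k⟩) (D ⟨0, h0k⟩) (C ⟨1, h1k⟩) (D ⟨1, h1k⟩) (fun s => min (C s) (D s)) (fun s => max (C s) (D s)) (by omega),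
              gid2 hk (C ⟨0, h0k⟩) (D ⟨0, h0k⟩) (C ⟨1, h1k⟩) (D ⟨1, h1k⟩) (fun s => min (C s) (D s)) (fun s => max (C s) (D s)) (by omega),
              arr_id2 hk (C ⟨0, h0k⟩) (D ⟨0, h0k⟩) (fun s => min (C s) (D s)) (by omega) (by omega),
              arr_swap' hk (C ⟨1, h1k⟩) (D ⟨1, h1k⟩) (fun s => max (C s) (D s)) hA hd1 (fun s hs => by have e1 := hc2 s hs; have e2 := hd2 s hs; show ℓ < max (C s) (D s); omega),
              arrT_id hk C hC.1 h0k h1k (by omega),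
              arrT_swap hk D hD.1 h0k h1k hd0 hd1]
          exact rowEq_col2 rfl (Multiset.pair_comm _ _) (fun s hs => minmax_pair _ _)
        · rcases Nat.lt_or_ge (D ⟨0, h0k⟩) (C ⟨0, h0k⟩) with h4 | h4
          · -- A3a
            refine ⟨col2 (D ⟨0, h0k⟩) (C ⟨1, h1k⟩) (fun s => min (C s) (D s)), col2 (C ⟨0, h0k⟩) (D ⟨1, h1k⟩) (fun s => max (C s) (D s)),
              build hk C D hC hD (D ⟨0, h0k⟩) (C ⟨1, h1k⟩) (C ⟨0, h0k⟩) (D ⟨1, h1k⟩) ⟨by omega, by omega, by omega, by omega⟩ (by omega) (by omega) (by omega) (by omega) (fun s hs => by have e1 := hc2 s hs; have e2 := hd2 s hs; omega) (fun s hs => by have e1 := hc2 s hs; have e2 := hd2 s hs; omega), ?_⟩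
            rw [gsw1 hk (D ⟨0, h0k⟩) (C ⟨1, h1k⟩) (C ⟨0, h0k⟩) (D ⟨1, h1k⟩) (fun s => min (C s) (D s)) (fun s => max (C s) (D s)) (by omega),
                gsw2 hk (D ⟨0, h0k⟩) (C ⟨1, h1k⟩) (C ⟨0, h0k⟩) (D ⟨1, h1k⟩) (fun s => min (C s) (D s)) (fun s => max (C s) (D s)) (by omega),
                arr_id2 hk (C ⟨0, h0k⟩) (C ⟨1, h1k⟩) (fun s => min (C s) (D s)) (by omega) (by omega),
                arr_swap' hk (D ⟨0, h0k⟩) (D ⟨1, h1k⟩) (fun s => max (C s) (D s)) hd0 hd1 (fun s hs => by have e1 := hc2 s hs; have e2 := hd2 s hs; show ℓ < max (C s) (D s); omega),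
                arrT_id hk C hC.1 h0k h1k (by omega),
                arrT_swap hk D hD.1 h0k h1k hd0 hd1]
            exact rowEq_col2 rfl rfl (fun s hs => minmax_pair _ _)
          · -- A3c
            refine ⟨col2 (C ⟨0, h0k⟩) (C ⟨1, h1k⟩) (fun s => min (C s) (D s)), col2 (D ⟨0, h0k⟩) (D ⟨1, h1k⟩) (fun s => max (C s) (D s)),
              build hk C D hC hD (C ⟨0, h0k⟩) (C ⟨1, h1k⟩) (D ⟨0, h0k⟩) (D ⟨1, h1k⟩) ⟨by omega, by omega, by omega, by omega⟩ (by omega) (by omega) (by omega) (by omega) (fun s hs => by have e1 := hc2 s hs; have e2 := hd2 s hs; omega) (fun s hs => by have e1 := hc2 s hs; have e2 := hd2 s hs; omega), ?_⟩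
            rw [gid1 hk (C ⟨0, h0k⟩) (C ⟨1, h1k⟩) (D ⟨0, h0k⟩) (D ⟨1, h1k⟩) (fun s => min (C s) (D s)) (fun s => max (C s) (D s)) (by omega),
                gid2 hk (C ⟨0, h0k⟩) (C ⟨1, h1k⟩) (D ⟨0, h0k⟩) (D ⟨1, h1k⟩) (fun s => min (C s) (D s)) (fun s => max (C s) (D s)) (by omega),
                arr_id2 hk (C ⟨0, h0k⟩) (C ⟨1, h1k⟩) (fun s => min (C s) (D s)) (by omega) (by omega),
                arr_swap' hk (D ⟨0, h0k⟩) (D ⟨1, h1k⟩) (fun s => max (C s) (D s)) hd0 hd1 (fun s hs => by have e1 := hc2 s hs; have e2 := hd2 s hs; show ℓ < max (C s) (D s); omega),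
                arrT_id hk C hC.1 h0k h1k (by omega),
                arrT_swap hk D hD.1 h0k h1k hd0 hd1]
            exact rowEq_col2 rfl rfl (fun s hs => minmax_pair _ _)
      · -- A2 : second column (L, L)
        refine ⟨col2 (C ⟨0, h0k⟩) (C ⟨1, h1k⟩) (fun s => min (C s) (D s)), col2 (D ⟨0, h0k⟩) (D ⟨1, h1k⟩) (fun s => max (C s) (D s)),
          build hk C D hC hD (C ⟨0, h0k⟩) (C ⟨1, h1k⟩) (D ⟨0, h0k⟩) (D ⟨1, h1k⟩) ⟨by omega, by omega, by omega, by omega⟩ (by omega) (by omega) (by omega) (by omega) (fun s hs => by have e1 := hc2 s hs; have e2 := hd2 s hs; omega) (fun s hs => by have e1 := hc2 s hs; have e2 := hd2 s hs; omega), ?_⟩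
        rw [gid1 hk (C ⟨0, h0k⟩) (C ⟨1, h1k⟩) (D ⟨0, h0k⟩) (D ⟨1, h1k⟩) (fun s => min (C s) (D s)) (fun s => max (C s) (D s)) (by omega),
            gid2 hk (C ⟨0, h0k⟩) (C ⟨1, h1k⟩) (D ⟨0, h0k⟩) (D ⟨1, h1k⟩) (fun s => min (C s) (D s)) (fun s => max (C s) (D s)) (by omega),
            arr_id2 hk (C ⟨0, h0k⟩) (C ⟨1, h1k⟩) (fun s => min (C s) (D s)) (by omega) (by omega),
            arr_id0 (D ⟨0, h0k⟩) (D ⟨1, h1k⟩) (fun s => max (C s) (D s)) hd0 hd1 (fun s hs => by have e1 := hc2 s hs; have e2 := hd2 s hs; show ℓ < max (C s) (D s); omega),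
            arrT_id hk C hC.1 h0k h1k (by omega),
            arrT_id hk D hD.1 h0k h1k (by omega)]
        exact rowEq_col2 rfl rfl (fun s hs => minmax_pair _ _)
  · -- first column is (S, L)
    obtain ⟨hB0, hB1, hB2⟩ := hB
    rcases le_or_gt (D ⟨0, h0k⟩) ℓ with hd0 | hd0
    · -- B1 : second column (S, L)
      refine ⟨col2 (min (C ⟨0, h0k⟩) (D ⟨0, h0k⟩)) (min (C ⟨1, h1k⟩) (D ⟨1, h1k⟩)) (fun s => min (C s) (D s)), col2 (max (C ⟨0, h0k⟩) (D ⟨0, h0k⟩)) (max (C ⟨1, h1k⟩) (D ⟨1, h1k⟩)) (fun s => max (C s) (D s)),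
        build hk C D hC hD (min (C ⟨0, h0k⟩) (D ⟨0, h0k⟩)) (min (C ⟨1, h1k⟩) (D ⟨1, h1k⟩)) (max (C ⟨0, h0k⟩) (D ⟨0, h0k⟩)) (max (C ⟨1, h1k⟩) (D ⟨1, h1k⟩)) ⟨by omega, by omega, by omega, by omega⟩ (by omega) (by omega) (by omega) (by omega) (fun s hs => by have e1 := hc2 s hs; have e2 := hd2 s hs; omega) (fun s hs => by have e1 := hc2 s hs; have e2 := hd2 s hs; omega), ?_⟩
      rw [gid1 hk (min (C ⟨0, h0k⟩) (D ⟨0, h0k⟩)) (min (C ⟨1, h1k⟩) (D ⟨1, h1k⟩)) (max (C ⟨0, h0k⟩) (D ⟨0, h0k⟩)) (max (C ⟨1, h1k⟩) (D ⟨1, h1k⟩)) (fun s => min (C s) (D s)) (fun s => max (C s) (D s)) (by omega),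
          gid2 hk (min (C ⟨0, h0k⟩) (D ⟨0, h0k⟩)) (min (C ⟨1, h1k⟩) (D ⟨1, h1k⟩)) (max (C ⟨0, h0k⟩) (D ⟨0, h0k⟩)) (max (C ⟨1, h1k⟩) (D ⟨1, h1k⟩)) (fun s => min (C s) (D s)) (fun s => max (C s) (D s)) (by omega),
          arr_swap' hk (min (C ⟨0, h0k⟩) (D ⟨0, h0k⟩)) (min (C ⟨1, h1k⟩) (D ⟨1, h1k⟩)) (fun s => min (C s) (D s)) (by omega) (by omega) (fun s hs => by have e1 := hc2 s hs; have e2 := hd2 s hs; show ℓ < min (C s) (D s); omega),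
          arr_swap' hk (max (C ⟨0, h0k⟩) (D ⟨0, h0k⟩)) (max (C ⟨1, h1k⟩) (D ⟨1, h1k⟩)) (fun s => max (C s) (D s)) (by omega) (by omega) (fun s hs => by have e1 := hc2 s hs; have e2 := hd2 s hs; show ℓ < max (C s) (D s); omega),
          arrT_swap hk C hC.1 h0k h1k hB0 hB1, arrT_swap hk D hD.1 h0k h1k hd0 hB2]
      exact rowEq_col2 (minmax_pair _ _) (minmax_pair _ _) (fun s hs => minmax_pair _ _)
    · -- B2 : second column (L, L)
      by_cases h3 : (D ⟨0, h0k⟩) < (C ⟨1, h1k⟩) ∧ (C ⟨1, h1k⟩) < (D ⟨1, h1k⟩)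
      · -- B2c
        refine ⟨col2 (C ⟨0, h0k⟩) (D ⟨0, h0k⟩) (fun s => min (C s) (D s)), col2 (C ⟨1, h1k⟩) (D ⟨1, h1k⟩) (fun s => max (C s) (D s)),
          build hk C D hC hD (C ⟨0, h0k⟩) (D ⟨0, h0k⟩) (C ⟨1, h1k⟩) (D ⟨1, h1k⟩) ⟨by omega, by omega, by omega, by omega⟩ (by omega) (by omega) (by omega) (by omega) (fun s hs => by have e1 := hc2 s hs; have e2 := hd2 s hs; omega) (fun s hs => by have e1 := hc2 s hs; have e2 := hd2 s hs; omega), ?_⟩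
        rw [gid1 hk (C ⟨0, h0k⟩) (D ⟨0, h0k⟩) (C ⟨1, h1k⟩) (D ⟨1, h1k⟩) (fun s => min (C s) (D s)) (fun s => max (C s) (D s)) (by omega),
            gid2 hk (C ⟨0, h0k⟩) (D ⟨0, h0k⟩) (C ⟨1, h1k⟩) (D ⟨1, h1k⟩) (fun s => min (C s) (D s)) (fun s => max (C s) (D s)) (by omega),
            arr_swap' hk (C ⟨0, h0k⟩) (D ⟨0, h0k⟩) (fun s => min (C s) (D s)) hB0 hd0 (fun s hs => by have e1 := hc2 s hs; have e2 := hd2 s hs; show ℓ < min (C s) (D s); omega),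
            arr_id0 (C ⟨1, h1k⟩) (D ⟨1, h1k⟩) (fun s => max (C s) (D s)) hB1 hB2 (fun s hs => by have e1 := hc2 s hs; have e2 := hd2 s hs; show ℓ < max (C s) (D s); omega),
            arrT_swap hk C hC.1 h0k h1k hB0 hB1,
            arrT_id hk D hD.1 h0k h1k (by omega)]
        exact rowEq_col2 (Multiset.pair_comm _ _) rfl (fun s hs => minmax_pair _ _)
      · rcases Nat.lt_or_ge (D ⟨1, h1k⟩) (C ⟨1, h1k⟩) with h4 | h4
        · -- B2a
          refine ⟨col2 (C ⟨0, h0k⟩) (D ⟨1, h1k⟩) (fun s => min (C s) (D s)), col2 (D ⟨0, h0k⟩) (C ⟨1, h1k⟩) (fun s => max (C s) (D s)),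
            build hk C D hC hD (C ⟨0, h0k⟩) (D ⟨1, h1k⟩) (D ⟨0, h0k⟩) (C ⟨1, h1k⟩) ⟨by omega, by omega, by omega, by omega⟩ (by omega) (by omega) (by omega) (by omega) (fun s hs => by have e1 := hc2 s hs; have e2 := hd2 s hs; omega) (fun s hs => by have e1 := hc2 s hs; have e2 := hd2 s hs; omega), ?_⟩
          rw [gsw1 hk (C ⟨0, h0k⟩) (D ⟨1, h1k⟩) (D ⟨0, h0k⟩) (C ⟨1, h1k⟩) (fun s => min (C s) (D s)) (fun s => max (C s) (D s)) (by omega),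
              gsw2 hk (C ⟨0, h0k⟩) (D ⟨1, h1k⟩) (D ⟨0, h0k⟩) (C ⟨1, h1k⟩) (fun s => min (C s) (D s)) (fun s => max (C s) (D s)) (by omega),
              arr_id0 (D ⟨0, h0k⟩) (D ⟨1, h1k⟩) (fun s => min (C s) (D s)) hd0 hB2 (fun s hs => by have e1 := hc2 s hs; have e2 := hd2 s hs; show ℓ < min (C s) (D s); omega),
              arr_swap' hk (C ⟨0, h0k⟩) (C ⟨1, h1k⟩) (fun s => max (C s) (D s)) hB0 hB1 (fun s hs => by have e1 := hc2 s hs; have e2 := hd2 s hs; show ℓ < max (C s) (D s); omega),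
              arrT_swap hk C hC.1 h0k h1k hB0 hB1,
              arrT_id hk D hD.1 h0k h1k (by omega)]
          exact rowEq_col2 (Multiset.pair_comm _ _) (Multiset.pair_comm _ _) (fun s hs => minmax_pair _ _)
        · -- B2b
          refine ⟨col2 (C ⟨0, h0k⟩) (C ⟨1, h1k⟩) (fun s => min (C s) (D s)), col2 (D ⟨0, h0k⟩) (D ⟨1, h1k⟩) (fun s => max (C s) (D s)),
            build hk C D hC hD (C ⟨0, h0k⟩) (C ⟨1, h1k⟩) (D ⟨0, h0k⟩) (D ⟨1, h1k⟩) ⟨by omega, by omega, by omega, by omega⟩ (by omega) (by omega) (by omega) (by omega) (fun s hs => by have e1 := hc2 s hs; have e2 := hd2 s hs; omega) (fun s hs => by have e1 := hc2 s hs; have e2 := hd2 s hs; omega), ?_⟩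
          rw [gid1 hk (C ⟨0, h0k⟩) (C ⟨1, h1k⟩) (D ⟨0, h0k⟩) (D ⟨1, h1k⟩) (fun s => min (C s) (D s)) (fun s => max (C s) (D s)) (by omega),
              gid2 hk (C ⟨0, h0k⟩) (C ⟨1, h1k⟩) (D ⟨0, h0k⟩) (D ⟨1, h1k⟩) (fun s => min (C s) (D s)) (fun s => max (C s) (D s)) (by omega),
              arr_swap' hk (C ⟨0, h0k⟩) (C ⟨1, h1k⟩) (fun s => min (C s) (D s)) hB0 hB1 (fun s hs => by have e1 := hc2 s hs; have e2 := hd2 s hs; show ℓ < min (C s) (D s); omega),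
              arr_id0 (D ⟨0, h0k⟩) (D ⟨1, h1k⟩) (fun s => max (C s) (D s)) hd0 hB2 (fun s hs => by have e1 := hc2 s hs; have e2 := hd2 s hs; show ℓ < max (C s) (D s); omega),
              arrT_swap hk C hC.1 h0k h1k hB0 hB1,
              arrT_id hk D hD.1 h0k h1k (by omega)]
          exact rowEq_col2 rfl rfl (fun s hs => minmax_pair _ _)
  · -- first column (L, L), second column (L, L)
    obtain ⟨hL0, hL1⟩ := hLL
    refine ⟨col2 (min (C ⟨0, h0k⟩) (D ⟨0, h0k⟩)) (min (C ⟨1, h1k⟩) (D ⟨1, h1k⟩)) (fun s => min (C s) (D s)), col2 (max (C ⟨0, h0k⟩) (D ⟨0, h0k⟩)) (max (C ⟨1, h1k⟩) (D ⟨1, h1k⟩)) (fun s => max (C s) (D s)),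
      build hk C D hC hD (min (C ⟨0, h0k⟩) (D ⟨0, h0k⟩)) (min (C ⟨1, h1k⟩) (D ⟨1, h1k⟩)) (max (C ⟨0, h0k⟩) (D ⟨0, h0k⟩)) (max (C ⟨1, h1k⟩) (D ⟨1, h1k⟩)) ⟨by omega, by omega, by omega, by omega⟩ (by omega) (by omega) (by omega) (by omega) (fun s hs => by have e1 := hc2 s hs; have e2 := hd2 s hs; omega) (fun s hs => by have e1 := hc2 s hs; have e2 := hd2 s hs; omega), ?_⟩
    rw [gid1 hk (min (C ⟨0, h0k⟩) (D ⟨0, h0k⟩)) (min (C ⟨1, h1k⟩) (D ⟨1, h1k⟩)) (max (C ⟨0, h0k⟩) (D ⟨0, h0k⟩)) (max (C ⟨1, h1k⟩) (D ⟨1, h1k⟩)) (fun s => min (C s) (D s)) (fun s => max (C s) (D s)) (by omega),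
        gid2 hk (min (C ⟨0, h0k⟩) (D ⟨0, h0k⟩)) (min (C ⟨1, h1k⟩) (D ⟨1, h1k⟩)) (max (C ⟨0, h0k⟩) (D ⟨0, h0k⟩)) (max (C ⟨1, h1k⟩) (D ⟨1, h1k⟩)) (fun s => min (C s) (D s)) (fun s => max (C s) (D s)) (by omega),
        arr_id0 (min (C ⟨0, h0k⟩) (D ⟨0, h0k⟩)) (min (C ⟨1, h1k⟩) (D ⟨1, h1k⟩)) (fun s => min (C s) (D s)) (by omega) (by omega) (fun s hs => by have e1 := hc2 s hs; have e2 := hd2 s hs; show ℓ < min (C s) (D s); omega),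
        arr_id0 (max (C ⟨0, h0k⟩) (D ⟨0, h0k⟩)) (max (C ⟨1, h1k⟩) (D ⟨1, h1k⟩)) (fun s => max (C s) (D s)) (by omega) (by omega) (fun s hs => by have e1 := hc2 s hs; have e2 := hd2 s hs; show ℓ < max (C s) (D s); omega),
        arrT_id hk C hC.1 h0k h1k (by omega), arrT_id hk D hD.1 h0k h1k (by omega)]
    exact rowEq_col2 (minmax_pair _ _) (minmax_pair _ _) (fun s hs => minmax_pair _ _)

end Stmt12

open Stmt12 in

/-- Let `T` be any two-column tableau whose columns are `k`-subsets
`C, D` of `[n]` arranged in `B_ℓ`-order. Then there is a two-column semi-standard Young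
tableau `T' = (I, J)` such that `Γ_ℓ(T')` (with columns in `B_ℓ`-order) and `T` are
row-wise equal. -/
theorem statement_12 (n k ℓ : ℕ) (hk : 0 < k) (hkn : k ≤ n)
    (hℓ1 : 1 ≤ ℓ) (hℓ2 : ℓ ≤ n - 1)
    (C D : Fin k → ℕ) (hC : IsIdx n k C) (hD : IsIdx n k D) :
    ∃ I J : Fin k → ℕ, SSYT n k I J ∧
      rowEq (rowArrange ℓ (Gamma ℓ I J).1) (rowArrange ℓ (Gamma ℓ I J).2)
            (rowArrange ℓ C) (rowArrange ℓ D) := by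
  rcases Nat.lt_or_ge k 2 with hk2 | hk2
  · -- k = 1
    have har : ∀ X : Fin k → ℕ, rowArrange ℓ X = X := by
      intro X; unfold rowArrange; rw [dif_neg (by omega : ¬ (2 : ℕ) ≤ k)]
    have hg : Gamma ℓ (fun s => min (C s) (D s)) (fun s => max (C s) (D s)) =
        ((fun s => min (C s) (D s)), (fun s => max (C s) (D s))) := by
      unfold Gamma; rw [dif_neg (by omega : ¬ (2 : ℕ) ≤ k)]
    refine ⟨fun s => min (C s) (D s), fun s => max (C s) (D s),
      ⟨⟨?_, ?_⟩, ⟨?_, ?_⟩, fun s => min_le_max⟩, ?_⟩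
    · intro a b hab
      have h1 := a.isLt; have h2 := b.isLt
      have h3 : (a : ℕ) < (b : ℕ) := hab
      omega
    · intro s
      show 1 ≤ min (C s) (D s) ∧ min (C s) (D s) ≤ n
      have h1 := hC.2 s; have h2 := hD.2 s; omega
    · intro a b hab
      have h1 := a.isLt; have h2 := b.isLt
      have h3 : (a : ℕ) < (b : ℕ) := hab
      omega
    · intro s
      show 1 ≤ max (C s) (D s) ∧ max (C s) (D s) ≤ n
      have h1 := hC.2 s; have h2 := hD.2 s; omega
    · rw [hg]
      simp only [har]
      exact fun s => minmax_pair (C s) (D s)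
  · -- k ≥ 2
    have h0k : 0 < k := by omega
    have h1k : 1 < k := by omega
    by_cases h1 : C ⟨1, h1k⟩ ≤ ℓ
    · exact key hk2 C D hC hD (Or.inl h1)
    · by_cases h2 : D ⟨1, h1k⟩ ≤ ℓ
      · obtain ⟨I, J, hS, hR⟩ := key hk2 D C hD hC (Or.inl h2)
        exact ⟨I, J, hS, fun s => (hR s).trans (Multiset.pair_comm _ _)⟩
      · by_cases h3 : C ⟨0, h0k⟩ ≤ ℓ
        · exact key hk2 C D hC hD
            (Or.inr (Or.inl ⟨h3, Nat.lt_of_not_le h1, Nat.lt_of_not_le h2⟩))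
        · by_cases h4 : D ⟨0, h0k⟩ ≤ ℓ
          · obtain ⟨I, J, hS, hR⟩ := key hk2 D C hD hC
              (Or.inr (Or.inl ⟨h4, Nat.lt_of_not_le h2, Nat.lt_of_not_le h1⟩))
            exact ⟨I, J, hS, fun s => (hR s).trans (Multiset.pair_comm _ _)⟩
          · exact key hk2 C D hC hD
              (Or.inr (Or.inr ⟨Nat.lt_of_not_le h3, Nat.lt_of_not_le h4⟩))
end
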